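/- arXiv:nlin/0603044 — 8 statements merged into one kernel-verified Lean document; each statement's English description precedes it below -/
import Mathlib

section
/- For every integer n ≥ 1 the coefficients of the Yablonskii–Vorob'ev polynomial Q_n satisfy: A_{n,m} = 0 for every m ≥ 1 not divisible by 3, and for every l ≥ 1 with 3l ≤ n(n+1)/2 one has A_{n,3l} = − (1/(3l)) · ( s_{n,3l} + s_{n,3l−3} A_{n,3} + s_{n,3l−6} A_{n,6} + … + s_{n,3} A_{n,3l−3} ), where A_{n,0} = 1. In particular all coefficients of Q_n are uniquely determined by the power sums s_{n,3}, s_{n,6}, …, i.e. by the first n(n+1)/2 + 1 coefficients of the expansion at infinity of the rational solution of the second Painlevé equation. -/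
open Polynomial

/-- The `m`-th power sum `s_{n,m}` of the complex roots (with multiplicity)
of the polynomial `Q n`. -/
noncomputable def powerSum (Q : ℕ → Polynomial ℚ) (n m : ℕ) : ℂ :=
  (((Q n).map (algebraMap ℚ ℂ)).roots.map (· ^ m)).sum

/-- `A_{n,k}`, the coefficient of `z^(n(n+1)/2 - k)` in `Q n`
(equal to `0` for `k > n(n+1)/2`). -/
def coeffA (Q : ℕ → Polynomial ℚ) (n k : ℕ) : ℚ :=
  if k ≤ n * (n + 1) / 2 then (Q n).coeff (n * (n + 1) / 2 - k) else 0


lemma comp_C_mul_X_coeff {R : Type*} [CommSemiring R] (p : R[X]) (a : R) (k : ℕ) :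
    (p.comp (C a * X)).coeff k = a ^ k * p.coeff k := by
  induction p using Polynomial.induction_on' with
  | add p q hp hq => simp [hp, hq, mul_add]
  | monomial n b =>
      rw [monomial_comp]
      simp only [mul_pow, ← C_pow, show C b * (C (a^n) * X ^ n) = C (b * a^n) * X ^ n by
        rw [C_mul]; ring, coeff_C_mul, coeff_X_pow, coeff_monomial]
      by_cases h : n = k
      · simp [h, mul_comm]
      · rw [if_neg h, if_neg (fun hk => h hk.symm), mul_zero, mul_zero]

lemma tri_succ (n : ℕ) : (n+1)*(n+2)/2 = n*(n+1)/2 + (n+1) := by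
  rw [show (n+1)*(n+2) = n*(n+1) + (n+1)*2 by ring, Nat.add_mul_div_right _ _ (by norm_num)]

lemma deriv_comp_scale (ω c : ℂ) (hω : ω ≠ 0) (u : ℂ[X]) (h : u.comp (C ω * X) = C c * u) :
    (derivative u).comp (C ω * X) = C (ω⁻¹ * c) * derivative u := by
  have h2 := congrArg derivative h
  rw [derivative_comp, derivative_mul, derivative_C, derivative_X, zero_mul, mul_one, zero_add,
    derivative_C_mul] at h2
  refine mul_left_cancel₀ (show (C ω : ℂ[X]) ≠ 0 from C_ne_zero.mpr hω) ?_
  rw [h2, ← mul_assoc, ← C_mul, ← mul_assoc, mul_inv_cancel₀ hω, one_mul]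

lemma rhs_scale (ω c : ℂ) (hω3 : ω^3 = 1) (u : ℂ[X]) (hu : u.comp (C ω * X) = C c * u) :
    (X * u^2 - 4*(u * derivative (derivative u) - (derivative u)^2)).comp (C ω * X)
      = C (ω * c^2) * (X * u^2 - 4*(u * derivative (derivative u) - (derivative u)^2)) := by
  have hω0 : ω ≠ 0 := fun h => by simp [h] at hω3
  have hu' := deriv_comp_scale ω c hω0 u hu
  have hu'' := deriv_comp_scale ω _ hω0 _ hu'
  have h1 : (C ω : ℂ[X]) * C ω⁻¹ = 1 := by rw [← C_mul, mul_inv_cancel₀ hω0, C_1]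
  have h2 : (C ω : ℂ[X])^3 = 1 := by rw [← C_pow, hω3, C_1]
  simp only [sub_comp, mul_comp, pow_comp, X_comp, ofNat_comp, hu, hu', hu'', C_mul, C_pow]
  set a : ℂ[X] := C ω
  set b : ℂ[X] := C ω⁻¹
  set cc : ℂ[X] := C c
  set v := derivative u
  set w := derivative (derivative u)
  linear_combination ((4*cc^2*v^2 - 4*cc^2*u*w)*a*(a*b+1))*h1 - ((4*cc^2*v^2 - 4*cc^2*u*w)*b^2)*h2

lemma QV_struct (Q : ℕ → Polynomial ℚ)
    (hQ0 : Q 0 = 1) (hQ1 : Q 1 = X)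
    (hQrec : ∀ n : ℕ, Q (n + 2) * Q n =
      X * (Q (n + 1)) ^ 2 -
        4 * (Q (n + 1) * derivative (derivative (Q (n + 1))) -
              (derivative (Q (n + 1))) ^ 2))
    (ω : ℂ) (hω3 : ω^3 = 1) :
    ∀ n : ℕ, (Q n).Monic ∧ (Q n).natDegree = n*(n+1)/2 ∧
      ((Q n).map (algebraMap ℚ ℂ)).comp (C ω * X)
        = C (ω ^ (n*(n+1)/2)) * (Q n).map (algebraMap ℚ ℂ) := by
  have key : ∀ n : ℕ,
      ((Q n).Monic ∧ (Q n).natDegree = n*(n+1)/2 ∧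
        ((Q n).map (algebraMap ℚ ℂ)).comp (C ω * X)
          = C (ω ^ (n*(n+1)/2)) * (Q n).map (algebraMap ℚ ℂ)) ∧
      ((Q (n+1)).Monic ∧ (Q (n+1)).natDegree = (n+1)*((n+1)+1)/2 ∧
        ((Q (n+1)).map (algebraMap ℚ ℂ)).comp (C ω * X)
          = C (ω ^ ((n+1)*((n+1)+1)/2)) * (Q (n+1)).map (algebraMap ℚ ℂ)) := by
    intro n
    induction n with
    | zero =>
        refine ⟨⟨?_, ?_, ?_⟩, ?_, ?_, ?_⟩ <;> simp [hQ0, hQ1, monic_X]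
    | succ n ih =>
        obtain ⟨⟨hm0, hd0, hc0⟩, hm1, hd1, hc1⟩ := ih
        refine ⟨⟨hm1, hd1, hc1⟩, ?_⟩
        have hω0 : ω ≠ 0 := fun h => by simp [h] at hω3
        set q := Q (n+1) with hq
        set m := (n+1)*(n+2)/2 with hmdef
        have t1 : (n+1)*(n+2)/2 = n*(n+1)/2 + (n+1) := tri_succ n
        have t2 : (n+2)*(n+3)/2 = (n+1)*(n+2)/2 + (n+2) := tri_succ (n+1)
        have hd1' : q.natDegree = m := hd1
        -- Step A : R is monic of degree 2m+1
        have hq2 : ((X : ℚ[X]) * q^2).Monic := monic_X.mul (hm1.pow 2)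
        have hdq2 : ((X : ℚ[X]) * q^2).natDegree = 2*m+1 := by
          rw [monic_X.natDegree_mul (hm1.pow 2), natDegree_pow, hd1', natDegree_X]; ring
        have hq' : (derivative q).natDegree ≤ m - 1 := hd1' ▸ natDegree_derivative_le q
        have hq'' : (derivative (derivative q)).natDegree ≤ m - 1 :=
          le_trans (natDegree_derivative_le _) (by omega)
        have hB : (4 * (q * derivative (derivative q) - (derivative q)^2)).natDegree ≤ 2*m := by
          refine le_trans natDegree_mul_le ?_
          have h4 : ((4 : ℚ[X])).natDegree = 0 := natDegree_ofNat 4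
          have hA1 : (q * derivative (derivative q)).natDegree ≤ 2*m := by
            refine le_trans natDegree_mul_le ?_; omega
          have hA2 : ((derivative q)^2).natDegree ≤ 2*m := by
            refine le_trans (natDegree_pow_le) ?_; omega
          have := natDegree_sub_le (q * derivative (derivative q)) ((derivative q)^2)
          omega
        set R : ℚ[X] := X * q^2 - 4 * (q * derivative (derivative q) - (derivative q)^2) with hR
        have hmonR : R.Monic := by
          refine hq2.sub_of_left ?_
          refine lt_of_le_of_lt (degree_le_natDegree) ?_
          rw [degree_eq_natDegree hq2.ne_zero, hdq2]
          exact_mod_cast lt_of_le_of_lt (Nat.cast_le.mpr hB) (by exact_mod_cast Nat.lt_succ_self (2*m))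
        have hdegR : R.natDegree = 2*m+1 := by
          rw [hR, natDegree_sub_eq_left_of_natDegree_lt (by omega), hdq2]
        -- Step B : monicity and degree of Q (n+2)
        have hrecn : Q (n+2) * Q n = R := hQrec n
        have hQn2ne : Q (n+2) ≠ 0 := by
          intro h
          rw [h, zero_mul] at hrecn
          exact hmonR.ne_zero hrecn.symm
        have hm2 : (Q (n+2)).Monic := by
          have := leadingCoeff_mul (Q (n+2)) (Q n)
          rw [hrecn, hmonR.leadingCoeff, hm0.leadingCoeff, mul_one] at this
          exact this.symm
        have hd2 : (Q (n+2)).natDegree = (n+2)*(n+3)/2 := by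
          have := natDegree_mul hQn2ne hm0.ne_zero
          rw [hrecn, hdegR, hd0] at this
          omega
        refine ⟨hm2, by exact_mod_cast hd2, ?_⟩
        -- Step C : the scaling property
        have hmap := congrArg (map (algebraMap ℚ ℂ)) hrecn
        simp only [Polynomial.map_mul, Polynomial.map_sub, Polynomial.map_pow,
          Polynomial.map_ofNat, Polynomial.map_X, ← derivative_map, hR] at hmap
        have hcomp := congrArg (fun p => p.comp (C ω * X)) hmap
        simp only [mul_comp] at hcomp
        rw [rhs_scale ω (ω^m) hω3 (q.map (algebraMap ℚ ℂ)) hc1, hc0, ← hmap] at hcomp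
        have hsum : (n+2)*(n+3)/2 + n*(n+1)/2 = 2*m+1 := by omega
        have hee : (C (ω * (ω^m)^2) : ℂ[X])
            = C (ω ^ ((n+2)*((n+2)+1)/2)) * C (ω ^ (n*(n+1)/2)) := by
          rw [← C_mul, ← pow_add]
          congr 1
          rw [show (n+2)*((n+2)+1)/2 + n*(n+1)/2 = 2*m+1 from hsum]
          ring
        have hBne : (C (ω ^ (n*(n+1)/2)) : ℂ[X]) * (Q n).map (algebraMap ℚ ℂ) ≠ 0 :=
          mul_ne_zero (C_ne_zero.mpr (pow_ne_zero _ hω0)) ((hm0.map _).ne_zero)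
        apply mul_right_cancel₀ hBne
        rw [hcomp, hee]
        ring
  exact fun n => (key n).1

lemma multiset_newton (s : Multiset ℂ) (k : ℕ) :
    (k : ℂ) * s.esymm k =
      (-1) ^ (k + 1) * ∑ a ∈ (Finset.HasAntidiagonal.antidiagonal k).filter (fun a => a.1 < k),
        (-1 : ℂ) ^ a.1 * s.esymm a.1 * (s.map (· ^ a.2)).sum := by
  classical
  obtain ⟨l, rfl⟩ : ∃ l : List ℂ, s = ↑l := ⟨s.toList, (Multiset.coe_toList s).symm⟩
  set f : Fin l.length → ℂ := l.get with hf
  have hs : (l : Multiset ℂ) = Multiset.map f Finset.univ.val := by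
    rw [Fin.univ_val_map, hf, List.ofFn_get]
  have key := congrArg (MvPolynomial.aeval f) (MvPolynomial.mul_esymm_eq_sum (Fin l.length) ℂ k)
  simp only [map_mul, map_pow, map_sum, map_natCast, map_neg, map_one,
    MvPolynomial.aeval_esymm_eq_multiset_esymm] at key
  have hpsum : ∀ n : ℕ, MvPolynomial.aeval f (MvPolynomial.psum (Fin l.length) ℂ n)
      = ((l : Multiset ℂ).map (· ^ n)).sum := by
    intro n
    rw [MvPolynomial.psum]
    simp only [map_sum, map_pow, MvPolynomial.aeval_X]
    rw [hs, Multiset.map_map]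
    rfl
  simp only [hpsum] at key
  conv_lhs => rw [hs]
  rw [key]
  congr 1
  exact Finset.sum_congr rfl fun a _ => by rw [← hs]

/-- The coefficients of the Yablonskii–Vorob'ev polynomial `Q n` satisfy:
`A_{n,m} = 0` whenever `3 ∤ m`, and for `1 ≤ l` with `3 l ≤ n(n+1)/2`,
`A_{n,3l} = -(1/(3l)) (s_{n,3l} A_{n,0} + s_{n,3l-3} A_{n,3} + ⋯ + s_{n,3} A_{n,3l-3})`. -/
theorem coeffA_formula
    (Q : ℕ → Polynomial ℚ)
    (hQ0 : Q 0 = 1) (hQ1 : Q 1 = X)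
    (hQrec : ∀ n : ℕ, Q (n + 2) * Q n =
      X * (Q (n + 1)) ^ 2 -
        4 * (Q (n + 1) * derivative (derivative (Q (n + 1))) -
              (derivative (Q (n + 1))) ^ 2)) :
    ∀ n : ℕ, 1 ≤ n →
      (∀ m : ℕ, 1 ≤ m → ¬ (3 ∣ m) → coeffA Q n m = 0) ∧
      (∀ l : ℕ, 1 ≤ l → 3 * l ≤ n * (n + 1) / 2 →
        ((coeffA Q n (3 * l) : ℚ) : ℂ) =
          - (1 / ((3 * l : ℕ) : ℂ)) *
            ∑ j ∈ Finset.range l,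
              powerSum Q n (3 * (l - j)) * ((coeffA Q n (3 * j) : ℚ) : ℂ)) := by
  have hprim := Complex.isPrimitiveRoot_exp 3 (by norm_num)
  set ω : ℂ := Complex.exp (2 * Real.pi * Complex.I / 3) with hωdef
  have hω3 : ω ^ 3 = 1 := hprim.pow_eq_one
  have hω0 : ω ≠ 0 := fun h => by simp [h] at hω3
  have hmod : ∀ k : ℕ, ω ^ k = ω ^ (k % 3) := by
    intro k
    conv_lhs => rw [← Nat.div_add_mod k 3]
    rw [pow_add, pow_mul, hω3, one_pow, one_mul]
  have struct := QV_struct Q hQ0 hQ1 hQrec ω hω3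
  intro n _
  obtain ⟨hmon, hdeg, hcomp⟩ := struct n
  -- the vanishing of coefficients in wrong residue classes
  have hvan : ∀ k : ℕ, k % 3 ≠ (n * (n + 1) / 2) % 3 → (Q n).coeff k = 0 := by
    intro k hk
    have h1 := congrArg (fun p => Polynomial.coeff p k) hcomp
    simp only [_root_.comp_C_mul_X_coeff, coeff_C_mul] at h1
    by_contra hc
    have hcc : ((Q n).map (algebraMap ℚ ℂ)).coeff k ≠ 0 := by
      rw [coeff_map, eq_ratCast]
      exact_mod_cast hc
    have hpow : ω ^ k = ω ^ (n * (n + 1) / 2) := mul_right_cancel₀ hcc h1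
    rw [hmod k, hmod (n * (n + 1) / 2)] at hpow
    exact hk (hprim.pow_inj (Nat.mod_lt _ (by norm_num)) (Nat.mod_lt _ (by norm_num)) hpow)
  have part1 : ∀ m : ℕ, 1 ≤ m → ¬ (3 ∣ m) → coeffA Q n m = 0 := by
    intro m hm h3
    by_cases hmd : m ≤ n * (n + 1) / 2
    · rw [coeffA, if_pos hmd]
      exact hvan _ (by omega)
    · rw [coeffA, if_neg hmd]
  refine ⟨part1, ?_⟩
  intro l hl hld
  set pC : ℂ[X] := (Q n).map (algebraMap ℚ ℂ) with hpC
  have hcard : Multiset.card pC.roots = pC.natDegree :=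
    (splits_iff_card_roots).1 (IsAlgClosed.splits pC)
  have hdegC : pC.natDegree = n * (n + 1) / 2 := by
    rw [hpC, hmon.natDegree_map]; exact hdeg
  have hA : ∀ i : ℕ, i ≤ n * (n + 1) / 2 →
      ((coeffA Q n i : ℚ) : ℂ) = (-1) ^ i * pC.roots.esymm i := by
    intro i hi
    rw [coeffA, if_pos hi]
    have h := Polynomial.coeff_eq_esymm_roots_of_card hcard
      (k := n * (n + 1) / 2 - i) (by rw [hdegC]; omega)
    rw [hdegC, (hmon.map _).leadingCoeff, one_mul,
      show n * (n + 1) / 2 - (n * (n + 1) / 2 - i) = i by omega] at h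
    rw [show (((Q n).coeff (n * (n + 1) / 2 - i) : ℚ) : ℂ)
        = pC.coeff (n * (n + 1) / 2 - i) by rw [hpC, coeff_map, eq_ratCast], h]
  have newton := multiset_newton pC.roots (3 * l)
  -- rewrite the Newton sum as a range sum
  have hsum1 : ∑ a ∈ (Finset.HasAntidiagonal.antidiagonal (3 * l)).filter (fun a => a.1 < 3 * l),
        (-1 : ℂ) ^ a.1 * pC.roots.esymm a.1 * (pC.roots.map (· ^ a.2)).sum
      = ∑ i ∈ Finset.range (3 * l),
        (-1 : ℂ) ^ i * pC.roots.esymm i * (pC.roots.map (· ^ (3 * l - i))).sum := by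
    rw [Finset.sum_filter, Finset.Nat.sum_antidiagonal_eq_sum_range_succ_mk,
      Finset.sum_range_succ, if_neg (lt_irrefl (3 * l)), add_zero]
    exact Finset.sum_congr rfl fun i hi => if_pos (Finset.mem_range.1 hi)
  have hsum2 : ∑ i ∈ Finset.range (3 * l),
        (-1 : ℂ) ^ i * pC.roots.esymm i * (pC.roots.map (· ^ (3 * l - i))).sum
      = ∑ i ∈ Finset.range (3 * l),
        ((coeffA Q n i : ℚ) : ℂ) * (pC.roots.map (· ^ (3 * l - i))).sum := by
    refine Finset.sum_congr rfl fun i hi => ?_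
    rw [hA i (le_trans (le_of_lt (Finset.mem_range.1 hi)) hld)]
  have hsum3 : ∑ i ∈ Finset.range (3 * l),
        ((coeffA Q n i : ℚ) : ℂ) * (pC.roots.map (· ^ (3 * l - i))).sum
      = ∑ j ∈ Finset.range l,
        ((coeffA Q n (3 * j) : ℚ) : ℂ) * (pC.roots.map (· ^ (3 * l - 3 * j))).sum := by
    set G : ℕ → ℂ := fun i => ((coeffA Q n i : ℚ) : ℂ)
        * (pC.roots.map (· ^ (3 * l - i))).sum with hG
    have step1 : ∑ i ∈ Finset.range (3 * l), G i
        = ∑ i ∈ (Finset.range l).image (fun j => 3 * j), G i := by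
      refine (Finset.sum_subset ?_ ?_).symm
      · intro x hx
        simp only [Finset.mem_image, Finset.mem_range] at hx ⊢
        obtain ⟨j, hj, rfl⟩ := hx
        omega
      · intro x hx hnx
        simp only [Finset.mem_image, Finset.mem_range] at hx hnx
        have h3 : ¬ (3 ∣ x) := by
          rintro ⟨j, rfl⟩
          exact hnx ⟨j, by omega, rfl⟩
        rw [hG]
        simp only [part1 x (by omega) h3]
        simp
    have step2 : ∑ i ∈ (Finset.range l).image (fun j => 3 * j), G i
        = ∑ j ∈ Finset.range l, G (3 * j) :=
      Finset.sum_image (fun x _ y _ h => by omega)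
    exact step1.trans step2
  have hsum4 : ∑ j ∈ Finset.range l,
        ((coeffA Q n (3 * j) : ℚ) : ℂ) * (pC.roots.map (· ^ (3 * l - 3 * j))).sum
      = ∑ j ∈ Finset.range l,
        powerSum Q n (3 * (l - j)) * ((coeffA Q n (3 * j) : ℚ) : ℂ) := by
    refine Finset.sum_congr rfl fun j hj => ?_
    have hj' : j < l := Finset.mem_range.1 hj
    rw [show 3 * l - 3 * j = 3 * (l - j) by omega, powerSum, mul_comm]
  have hk0 : ((3 * l : ℕ) : ℂ) ≠ 0 := Nat.cast_ne_zero.mpr (by omega)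
  have hfin : ((3 * l : ℕ) : ℂ) * ((coeffA Q n (3 * l) : ℚ) : ℂ)
      = - ∑ j ∈ Finset.range l,
          powerSum Q n (3 * (l - j)) * ((coeffA Q n (3 * j) : ℚ) : ℂ) := by
    rw [hA (3 * l) hld]
    calc ((3 * l : ℕ) : ℂ) * ((-1) ^ (3 * l) * pC.roots.esymm (3 * l))
        = (-1) ^ (3 * l) * (((3 * l : ℕ) : ℂ) * pC.roots.esymm (3 * l)) := by ring
      _ = (-1) ^ (3 * l) * ((-1) ^ (3 * l + 1) *
          ∑ a ∈ (Finset.HasAntidiagonal.antidiagonal (3 * l)).filter (fun a => a.1 < 3 * l),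
            (-1 : ℂ) ^ a.1 * pC.roots.esymm a.1 * (pC.roots.map (· ^ a.2)).sum) := by
          rw [newton]
      _ = - ∑ a ∈ (Finset.HasAntidiagonal.antidiagonal (3 * l)).filter (fun a => a.1 < 3 * l),
            (-1 : ℂ) ^ a.1 * pC.roots.esymm a.1 * (pC.roots.map (· ^ a.2)).sum := by
          rw [← mul_assoc, ← pow_add]
          rw [Odd.neg_one_pow ⟨3 * l, by ring⟩, neg_one_mul]
      _ = _ := by rw [hsum1, hsum2, hsum3, hsum4]
  refine mul_left_cancel₀ hk0 ?_
  rw [hfin, ← mul_assoc, mul_neg, mul_one_div, div_self hk0, neg_one_mul]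
end

section
/- For every integer l ≥ 0, the polynomial c_l(α) has degree exactly 2l + 1 in α. -/
open Polynomial

/-- Each coefficient polynomial `c l` of the expansion at infinity of solutions
of the second Painlevé equation has degree exactly `2 l + 1` in `α`. -/
theorem painleveII_coeff_degree
    (c : ℕ → Polynomial ℚ)
    (hc0 : c 0 = -X)
    (hcrec : ∀ l : ℕ, c (l + 1) =
      (C (((3 * l + 2) * (3 * l + 1) : ℕ) : ℚ)) * c l -
        2 * ∑ m ∈ Finset.range (l + 1), ∑ k ∈ Finset.range (m + 1),
              c k * c (m - k) * c (l - m)) :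
    ∀ l : ℕ, (c l).degree = ((2 * l + 1 : ℕ) : WithBot ℕ) := by
  suffices h : ∀ l : ℕ, (c l).degree = ((2 * l + 1 : ℕ) : WithBot ℕ) ∧
      0 < (-1 : ℚ) ^ (l + 1) * (c l).leadingCoeff from fun l => (h l).1
  intro l
  induction l using Nat.strong_induction_on with
  | _ l IH =>
  match l with
  | 0 =>
    constructor
    · simp [hc0]
    · simp [hc0, leadingCoeff]
  | Nat.succ n =>
    -- notation
    set S : Polynomial ℚ := ∑ m ∈ Finset.range (n + 1), ∑ k ∈ Finset.range (m + 1),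
        c k * c (m - k) * c (n - m) with hS
    have hterm : ∀ m ∈ Finset.range (n + 1), ∀ k ∈ Finset.range (m + 1),
        (c k * c (m - k) * c (n - m)).degree = ((2 * n + 3 : ℕ) : WithBot ℕ) := by
      intro m hm k hk
      rw [Finset.mem_range] at hm hk
      have hkm : k ≤ m := Nat.lt_succ_iff.mp hk
      have hmn : m ≤ n := Nat.lt_succ_iff.mp hm
      have d1 := (IH k (by omega)).1
      have d2 := (IH (m - k) (by omega)).1
      have d3 := (IH (n - m) (by omega)).1
      rw [degree_mul, degree_mul, d1, d2, d3, ← Nat.cast_add, ← Nat.cast_add,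
        Nat.cast_inj]
      omega
    have htermnd : ∀ m ∈ Finset.range (n + 1), ∀ k ∈ Finset.range (m + 1),
        (c k * c (m - k) * c (n - m)).natDegree = 2 * n + 3 := fun m hm k hk =>
      natDegree_eq_of_degree_eq_some (hterm m hm k hk)
    -- coefficient of S at 2n+3
    have hScoeff : S.coeff (2 * n + 3) = ∑ m ∈ Finset.range (n + 1),
        ∑ k ∈ Finset.range (m + 1),
          (c k).leadingCoeff * (c (m - k)).leadingCoeff * (c (n - m)).leadingCoeff := by
      rw [hS, finset_sum_coeff]
      refine Finset.sum_congr rfl fun m hm => ?_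
      rw [finset_sum_coeff]
      refine Finset.sum_congr rfl fun k hk => ?_
      have := htermnd m hm k hk
      rw [← this, coeff_natDegree, leadingCoeff_mul, leadingCoeff_mul]
    have hSpos : 0 < (-1 : ℚ) ^ (n + 1) * S.coeff (2 * n + 3) := by
      rw [hScoeff, Finset.mul_sum]
      refine Finset.sum_pos (fun m hm => ?_) ⟨0, Finset.mem_range.mpr (by omega)⟩
      rw [Finset.mul_sum]
      refine Finset.sum_pos (fun k hk => ?_) ⟨0, Finset.mem_range.mpr (by omega)⟩
      rw [Finset.mem_range] at hm hk
      have hkm : k ≤ m := Nat.lt_succ_iff.mp hk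
      have hmn : m ≤ n := Nat.lt_succ_iff.mp hm
      have p1 := (IH k (by omega)).2
      have p2 := (IH (m - k) (by omega)).2
      have p3 := (IH (n - m) (by omega)).2
      have hexp : (k + 1) + (m - k + 1) + (n - m + 1) = n + 3 := by omega
      have flip : (-1 : ℚ) ^ (n + 3) = (-1 : ℚ) ^ (n + 1) := by
        rw [show n + 3 = (n + 1) + 2 by omega, pow_add, neg_one_sq, mul_one]
      have key : (-1 : ℚ) ^ (n + 1) = (-1 : ℚ) ^ (k + 1) * (-1) ^ (m - k + 1) * (-1) ^ (n - m + 1) := by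
        rw [← pow_add, ← pow_add, hexp, flip]
      calc (0 : ℚ) < ((-1 : ℚ) ^ (k + 1) * (c k).leadingCoeff) *
            ((-1 : ℚ) ^ (m - k + 1) * (c (m - k)).leadingCoeff) *
            ((-1 : ℚ) ^ (n - m + 1) * (c (n - m)).leadingCoeff) :=
          mul_pos (mul_pos p1 p2) p3
        _ = (-1 : ℚ) ^ (n + 1) * ((c k).leadingCoeff * (c (m - k)).leadingCoeff *
            (c (n - m)).leadingCoeff) := by rw [key]; ring
    have hScne : S.coeff (2 * n + 3) ≠ 0 := by
      intro h0
      rw [h0, mul_zero] at hSpos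
      exact lt_irrefl 0 hSpos
    -- degree of S
    have hSdeg : S.degree ≤ ((2 * n + 3 : ℕ) : WithBot ℕ) := by
      refine (degree_sum_le _ _).trans (Finset.sup_le fun m hm => ?_)
      refine (degree_sum_le _ _).trans (Finset.sup_le fun k hk => ?_)
      exact le_of_eq (hterm m hm k hk)
    -- coefficient of c (n+1) at 2n+3
    have hclow : (c n).coeff (2 * n + 3) = 0 := by
      refine coeff_eq_zero_of_degree_lt ?_
      rw [(IH n (by omega)).1]
      exact_mod_cast Nat.lt_of_lt_of_le (by omega) le_rfl
    have h2S : (2 : Polynomial ℚ) * S = C 2 * S := by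
      rw [map_ofNat C 2]
    have hc1 : (c (n + 1)).coeff (2 * n + 3) = -2 * S.coeff (2 * n + 3) := by
      rw [hcrec n, coeff_sub, coeff_C_mul, hclow, mul_zero, h2S, coeff_C_mul]
      ring
    have hc1ne : (c (n + 1)).coeff (2 * n + 3) ≠ 0 := by
      rw [hc1]
      exact mul_ne_zero (by norm_num) hScne
    -- degree of c (n+1)
    have hdegle : (c (n + 1)).degree ≤ ((2 * n + 3 : ℕ) : WithBot ℕ) := by
      rw [hcrec n]
      refine (degree_sub_le _ _).trans (max_le ?_ ?_)
      · refine (degree_mul_le _ _).trans ?_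
        calc (C (((3 * n + 2) * (3 * n + 1) : ℕ) : ℚ)).degree + (c n).degree
            ≤ 0 + ((2 * n + 1 : ℕ) : WithBot ℕ) :=
              add_le_add degree_C_le (le_of_eq (IH n (by omega)).1)
          _ = ((2 * n + 1 : ℕ) : WithBot ℕ) := zero_add _
          _ ≤ ((2 * n + 3 : ℕ) : WithBot ℕ) := by exact_mod_cast Nat.le_of_lt (by omega)
      · rw [two_mul]
        exact (degree_add_le _ _).trans (max_le hSdeg hSdeg)
    have hdeg : (c (n + 1)).degree = ((2 * n + 3 : ℕ) : WithBot ℕ) :=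
      le_antisymm hdegle (le_degree_of_ne_zero hc1ne)
    have hnd : (c (n + 1)).natDegree = 2 * n + 3 := natDegree_eq_of_degree_eq_some hdeg
    constructor
    · rw [show 2 * (n + 1) + 1 = 2 * n + 3 by omega]
      exact hdeg
    · rw [leadingCoeff, hnd, hc1]
      have : (-1 : ℚ) ^ (n + 1 + 1) * (-2 * S.coeff (2 * n + 3)) =
          2 * ((-1 : ℚ) ^ (n + 1) * S.coeff (2 * n + 3)) := by ring
      rw [this]
      linarith [hSpos]
end

section
/- For every integer n ≥ 0: if n ≡ 0 or n ≡ 2 (mod 3), then there exists a polynomial R with rational coefficients such that Q_n(z) = R(z³); if n ≡ 1 (mod 3), then there exists a polynomial R with rational coefficients such that Q_n(z) = z · R(z³). -/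
open Polynomial Finset

/-- `P` has coefficient support in the residue class `t` mod 3. -/
def YVSupp (t : ℕ) (P : Polynomial ℚ) : Prop :=
  ∀ k, k % 3 ≠ t % 3 → P.coeff k = 0

lemma yvsupp_congr {t s : ℕ} {P : Polynomial ℚ} (h : t % 3 = s % 3) (hP : YVSupp t P) :
    YVSupp s P := fun k hk => hP k (by omega)

lemma yvsupp_mul {t s : ℕ} {P R : Polynomial ℚ} (hP : YVSupp t P) (hR : YVSupp s R) :
    YVSupp (t + s) (P * R) := by
  intro k hk
  rw [coeff_mul]
  apply Finset.sum_eq_zero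
  rintro ⟨a, b⟩ hab
  rw [Finset.HasAntidiagonal.mem_antidiagonal] at hab
  by_cases ha : a % 3 = t % 3
  · have hb : b % 3 ≠ s % 3 := by omega
    simp [hR b hb]
  · simp [hP a ha]

lemma yvsupp_deriv {t : ℕ} {P : Polynomial ℚ} (hP : YVSupp t P) :
    YVSupp (t + 2) (derivative P) := by
  intro k hk
  rw [coeff_derivative, hP (k + 1) (by omega)]
  simp

lemma yvsupp_sub {t : ℕ} {P R : Polynomial ℚ} (hP : YVSupp t P) (hR : YVSupp t R) :
    YVSupp t (P - R) := by
  intro k hk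
  rw [coeff_sub, hP k hk, hR k hk, sub_zero]

lemma yvsupp_C_mul {t : ℕ} {P : Polynomial ℚ} (c : ℚ) (hP : YVSupp t P) :
    YVSupp t (C c * P) := by
  intro k hk
  rw [coeff_C_mul, hP k hk, mul_zero]

lemma yvsupp_X : YVSupp 1 (X : Polynomial ℚ) := by
  intro k hk
  rw [coeff_X]
  split
  · omega
  · rfl

/-- Division lemma: support classes divide out. -/
lemma yvsupp_div {s u : ℕ} {A B : Polynomial ℚ} (hB : YVSupp s B) (hB0 : B ≠ 0)
    (hAB : YVSupp u (A * B)) : YVSupp (u + 2 * s) A := by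
  by_contra h
  unfold YVSupp at h
  push_neg at h
  obtain ⟨k, hk, hk0⟩ := h
  set t := u + 2 * s with ht
  set S := A.support.filter (fun m => ¬ m % 3 = t % 3) with hS
  have hSne : S.Nonempty := ⟨k, by simp [hS, mem_support_iff, hk0, hk]⟩
  set i := S.max' hSne with hidef
  have hi : i ∈ S := S.max'_mem hSne
  rw [hS, Finset.mem_filter, mem_support_iff] at hi
  have hmax : ∀ a, i < a → a % 3 ≠ t % 3 → A.coeff a = 0 := by
    intro a ha hat
    by_contra h0
    have haS : a ∈ S := by simp [hS, mem_support_iff, h0, hat]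
    have := S.le_max' a haS
    omega
  set d := B.natDegree with hd
  have hBd : B.coeff d = B.leadingCoeff := rfl
  have hBlead : B.coeff d ≠ 0 := by
    rw [hBd]; exact leadingCoeff_ne_zero.mpr hB0
  have hds : d % 3 = s % 3 := by
    by_contra hc
    exact hBlead (hB d hc)
  have hkey : (A * B).coeff (i + d) = 0 := hAB _ (by omega)
  rw [coeff_mul, Finset.sum_eq_single (i, d)] at hkey
  · exact mul_ne_zero hi.1 hBlead hkey
  · rintro ⟨a, b⟩ hab hne
    rw [Finset.HasAntidiagonal.mem_antidiagonal] at hab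
    by_cases hbd : d < b
    · rw [coeff_eq_zero_of_natDegree_lt hbd, mul_zero]
    · by_cases hbs : b % 3 = s % 3
      · have hai : A.coeff a = 0 := by
          by_cases hba : b = d
          · exact absurd (by simp [hba]; omega) hne
          · exact hmax a (by omega) (by omega)
        rw [hai, zero_mul]
      · rw [hB b hbs, mul_zero]
  · intro hnot
    exact (hnot (Finset.HasAntidiagonal.mem_antidiagonal.mpr rfl)).elim

lemma yv_rhs_ne_zero {B : Polynomial ℚ} (hB : B ≠ 0) :
    X * B ^ 2 - 4 * (B * derivative (derivative B) - (derivative B) ^ 2) ≠ 0 := by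
  intro h
  set d := B.natDegree with hd
  have hdd : (derivative B).natDegree ≤ d := le_trans (natDegree_derivative_le B) (Nat.sub_le _ _)
  have hddd : (derivative (derivative B)).natDegree ≤ d :=
    le_trans (natDegree_derivative_le _) (le_trans (Nat.sub_le _ _) hdd)
  have h1 : (X * B ^ 2).coeff (2 * d + 1) = B.leadingCoeff ^ 2 := by
    rw [coeff_X_mul, two_mul, pow_two, coeff_mul_degree_add_degree, sq]
  have h2 : (B * derivative (derivative B)).coeff (2 * d + 1) = 0 := by
    apply coeff_eq_zero_of_natDegree_lt
    calc (B * derivative (derivative B)).natDegree ≤ d + d :=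
          le_trans (natDegree_mul_le) (add_le_add le_rfl hddd)
      _ < 2 * d + 1 := by omega
  have h3 : ((derivative B) ^ 2).coeff (2 * d + 1) = 0 := by
    apply coeff_eq_zero_of_natDegree_lt
    calc ((derivative B) ^ 2).natDegree ≤ 2 * (derivative B).natDegree := natDegree_pow_le
      _ < 2 * d + 1 := by omega
  have h4 : ((4 : Polynomial ℚ) * (B * derivative (derivative B) - (derivative B) ^ 2)).coeff
      (2 * d + 1) = 0 := by
    rw [(map_ofNat C 4).symm, coeff_C_mul, coeff_sub, h2, h3]
    ring
  have := congrArg (fun p => Polynomial.coeff p (2 * d + 1)) h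
  simp only [coeff_sub, h1, h4, coeff_zero, sub_zero] at this
  exact hB (leadingCoeff_eq_zero.mp (by
    have := sq_eq_zero_iff.mp this
    exact this))

/-- The key invariant: `Q n ≠ 0` and support class of `Q n`. -/
lemma yv_key
    (Q : ℕ → Polynomial ℚ)
    (hQ0 : Q 0 = 1) (hQ1 : Q 1 = X)
    (hQrec : ∀ n : ℕ, Q (n + 2) * Q n =
      X * (Q (n + 1)) ^ 2 -
        4 * (Q (n + 1) * derivative (derivative (Q (n + 1))) -
              (derivative (Q (n + 1))) ^ 2)) :
    ∀ n : ℕ, Q n ≠ 0 ∧ YVSupp (if n % 3 = 1 then 1 else 0) (Q n) := by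
  have step : ∀ n, (Q n ≠ 0 ∧ YVSupp (if n % 3 = 1 then 1 else 0) (Q n)) →
      (Q (n+1) ≠ 0 ∧ YVSupp (if (n+1) % 3 = 1 then 1 else 0) (Q (n+1))) →
      (Q (n+2) ≠ 0 ∧ YVSupp (if (n+2) % 3 = 1 then 1 else 0) (Q (n+2))) := by
    intro n ⟨hA0, hA⟩ ⟨hB0, hB⟩
    set s : ℕ := if n % 3 = 1 then 1 else 0 with hs
    set t : ℕ := if (n+1) % 3 = 1 then 1 else 0 with htd
    have hrec := hQrec n
    have hrhs0 : X * (Q (n + 1)) ^ 2 -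
        4 * (Q (n + 1) * derivative (derivative (Q (n + 1))) -
              (derivative (Q (n + 1))) ^ 2) ≠ 0 := yv_rhs_ne_zero hB0
    have hC0 : Q (n + 2) ≠ 0 := by
      intro h
      rw [h, zero_mul] at hrec
      exact hrhs0 hrec.symm
    refine ⟨hC0, ?_⟩
    -- support of the RHS
    have hXB2 : YVSupp (1 + (t + t)) (X * (Q (n+1)) ^ 2) := by
      rw [pow_two]
      exact yvsupp_mul yvsupp_X (yvsupp_mul hB hB)
    have hBB'' : YVSupp (t + (t + 2 + 2)) (Q (n+1) * derivative (derivative (Q (n+1)))) :=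
      yvsupp_mul hB (yvsupp_deriv (yvsupp_deriv hB))
    have hB'2 : YVSupp ((t + 2) + (t + 2)) ((derivative (Q (n+1))) ^ 2) := by
      rw [pow_two]
      exact yvsupp_mul (yvsupp_deriv hB) (yvsupp_deriv hB)
    have hsub : YVSupp (2 * t + 4)
        (Q (n+1) * derivative (derivative (Q (n+1))) - (derivative (Q (n+1))) ^ 2) :=
      yvsupp_sub (yvsupp_congr (by omega) hBB'') (yvsupp_congr (by omega) hB'2)
    have h4 : (4 : Polynomial ℚ) = C 4 := (map_ofNat C 4).symm
    have hrhs : YVSupp (2 * t + 1)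
        (X * (Q (n+1)) ^ 2 -
          4 * (Q (n+1) * derivative (derivative (Q (n+1))) - (derivative (Q (n+1))) ^ 2)) := by
      apply yvsupp_sub (yvsupp_congr (by omega) hXB2)
      rw [h4]
      exact yvsupp_C_mul 4 (yvsupp_congr (by omega) hsub)
    have hprod : YVSupp (2 * t + 1) (Q (n + 2) * Q n) := by rw [hrec]; exact hrhs
    have hdiv : YVSupp (2 * t + 1 + 2 * s) (Q (n + 2)) := yvsupp_div hA hA0 hprod
    apply yvsupp_congr (t := 2 * t + 1 + 2 * s) _ hdiv
    rw [hs, htd]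
    split_ifs with a b c <;> omega
  have base0 : Q 0 ≠ 0 ∧ YVSupp (if 0 % 3 = 1 then 1 else 0) (Q 0) := by
    rw [hQ0]
    refine ⟨one_ne_zero, ?_⟩
    intro k hk
    norm_num at hk
    rw [coeff_one, if_neg (by omega)]
  have base1 : Q 1 ≠ 0 ∧ YVSupp (if 1 % 3 = 1 then 1 else 0) (Q 1) := by
    rw [hQ1]
    exact ⟨X_ne_zero, by simpa using yvsupp_X⟩
  intro n
  induction n using Nat.strong_induction_on with
  | _ n ih =>
    match n with
    | 0 => exact base0
    | 1 => exact base1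
    | (m + 2) => exact step m (ih m (by omega)) (ih (m+1) (by omega))

lemma yvsupp_zero_exists {P : Polynomial ℚ} (h : YVSupp 0 P) :
    ∃ R : Polynomial ℚ, P = R.comp (X ^ 3) := by
  refine ⟨∑ k ∈ P.support, C (P.coeff k) * X ^ (k / 3), ?_⟩
  rw [Polynomial.sum_comp]
  conv_lhs => rw [P.as_sum_support_C_mul_X_pow]
  refine Finset.sum_congr rfl fun k hk => ?_
  have hk3 : k % 3 = 0 := by
    by_contra hc
    exact (Polynomial.mem_support_iff.mp hk) (h k (by omega))
  obtain ⟨m, rfl⟩ : ∃ m, k = 3 * m := ⟨k / 3, by omega⟩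
  have hm : 3 * m / 3 = m := by omega
  rw [mul_comp, C_comp, pow_comp, X_comp, hm, ← pow_mul]

lemma yvsupp_one_exists {P : Polynomial ℚ} (h : YVSupp 1 P) :
    ∃ R : Polynomial ℚ, P = X * R.comp (X ^ 3) := by
  refine ⟨∑ k ∈ P.support, C (P.coeff k) * X ^ (k / 3), ?_⟩
  rw [Polynomial.sum_comp, Finset.mul_sum]
  conv_lhs => rw [P.as_sum_support_C_mul_X_pow]
  refine Finset.sum_congr rfl fun k hk => ?_
  have hk3 : k % 3 = 1 := by
    by_contra hc
    exact (Polynomial.mem_support_iff.mp hk) (h k (by omega))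
  obtain ⟨m, rfl⟩ : ∃ m, k = 3 * m + 1 := ⟨k / 3, by omega⟩
  have hm : (3 * m + 1) / 3 = m := by omega
  rw [mul_comp, C_comp, pow_comp, X_comp, hm, ← pow_mul]
  ring

/-- Structure of the Yablonskii–Vorob'ev polynomials: if `n ≡ 0` or `n ≡ 2 (mod 3)`
then `Q n` is a polynomial in `z³`; if `n ≡ 1 (mod 3)` then `Q n = z · R(z³)` for
some polynomial `R`. -/
theorem yablonskii_vorobev_structure
    (Q : ℕ → Polynomial ℚ)
    (hQ0 : Q 0 = 1) (hQ1 : Q 1 = X)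
    (hQrec : ∀ n : ℕ, Q (n + 2) * Q n =
      X * (Q (n + 1)) ^ 2 -
        4 * (Q (n + 1) * derivative (derivative (Q (n + 1))) -
              (derivative (Q (n + 1))) ^ 2)) :
    ∀ n : ℕ,
      (n % 3 = 0 ∨ n % 3 = 2 → ∃ R : Polynomial ℚ, Q n = R.comp (X ^ 3)) ∧
      (n % 3 = 1 → ∃ R : Polynomial ℚ, Q n = X * R.comp (X ^ 3)) := by
  have key := yv_key Q hQ0 hQ1 hQrec
  intro n
  obtain ⟨hn0, hnS⟩ := key n
  constructor
  · intro h
    apply yvsupp_zero_exists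
    rcases h with h | h <;> simpa [h] using hnS
  · intro h
    apply yvsupp_one_exists
    simpa [h] using hnS
end

section
/- For every integer n ≥ 1, the rational function w_n = Q_{n−1}'/Q_{n−1} − Q_n'/Q_n (an element of the field of rational functions in z over ℚ) satisfies the second Painlevé equation w_n'' = 2 w_n³ + z w_n + n. -/
open Polynomial

section PainleveAux

variable {K : Type*} [Field K] [Algebra ℚ K] (d : Derivation ℚ K K)

private lemma yv_dmul (u v : K) : d (u * v) = u * d v + v * d u := by
  simpa [smul_eq_mul] using d.leibniz u v

private lemma yv_ddiv (u v : K) : d (u / v) = (d u * v - u * d v) / v ^ 2 := by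
  rw [Derivation.leibniz_div, smul_eq_mul, smul_eq_mul, smul_eq_mul, div_eq_mul_inv, ← inv_pow]
  ring

private lemma yv_dsq (z : K) : d (z ^ 2) = 2 * z * d z := by
  rw [pow_two, yv_dmul]; ring

private lemma yv_dlog3 (u v z : K) (hu : u ≠ 0) (hv : v ≠ 0) (hz : z ≠ 0) :
    d (u * v / z ^ 2) = (u * v / z ^ 2) * (d u / u + d v / v - 2 * (d z / z)) := by
  rw [yv_ddiv, yv_dmul, yv_dsq]
  field_simp
  ring

private lemma yv_dconst (n : ℕ) : d (2 * (n : K) + 1) = 0 := by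
  have h : (2 * (n : K) + 1) = ((2 * n + 1 : ℕ) : K) := by push_cast; ring
  rw [h, d.map_natCast]

/-- Main analytic induction: the triple (A, B, Π). -/
private lemma yv_main (x : K) (hdx : d x = 1) (a : ℕ → K) (ha : ∀ k, a k ≠ 0)
    (ha0 : a 0 = 1) (ha1 : a 1 = 1) (ha2 : a 2 = x)
    (hT : ∀ k, a (k + 2) * a k =
      x * a (k + 1) ^ 2 - 4 * (a (k + 1) * d (d (a (k + 1))) - d (a (k + 1)) ^ 2)) :
    ∀ n : ℕ,
      (2 * d (d (a n) / a n - d (a (n + 1)) / a (n + 1))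
          + 2 * (d (a n) / a n - d (a (n + 1)) / a (n + 1)) ^ 2 + x
        = a (n + 2) * a n / a (n + 1) ^ 2)
      ∧ ((d (a n) / a n - d (a (n + 1)) / a (n + 1))
            + (d (a (n + 1)) / a (n + 1) - d (a (n + 2)) / a (n + 2))
          = -(2 * (n : K) + 1) / (a (n + 2) * a n / a (n + 1) ^ 2))
      ∧ (d (d (d (a n) / a n - d (a (n + 1)) / a (n + 1)))
          = 2 * (d (a n) / a n - d (a (n + 1)) / a (n + 1)) ^ 3
            + x * (d (a n) / a n - d (a (n + 1)) / a (n + 1)) + (n : K)) := by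
  -- Toda in logarithmic-derivative form
  have hToda2 : ∀ m : ℕ, a (m + 2) * a m / a (m + 1) ^ 2
      = x - 4 * d (d (a (m + 1)) / a (m + 1)) := by
    intro m
    rw [yv_ddiv]
    field_simp [ha (m + 1)]
    linear_combination hT m
  have hx0 : x ≠ 0 := ha2 ▸ ha 2
  intro n
  induction n with
  | zero =>
    have e0 : d (a 0) = 0 := by rw [ha0]; exact d.map_one_eq_zero
    have e1 : d (a 1) = 0 := by rw [ha1]; exact d.map_one_eq_zero
    have w0 : d (a 0) / a 0 - d (a 1) / a 1 = 0 := by rw [e0, e1]; simp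
    have w1 : d (a 1) / a 1 - d (a 2) / a 2 = -(1 / x) := by
      rw [e1, ha1, ha2, hdx]; simp
    refine ⟨?_, ?_, ?_⟩
    · rw [w0, ha0, ha1, ha2]; simp
    · rw [w0, w1, ha0, ha1, ha2]
      field_simp [hx0]
      simp
    · rw [w0]; simp
  | succ n ih =>
    obtain ⟨ihA, ihB, ihP⟩ := ih
    simp only [show n + 1 + 1 = n + 2 from rfl, show n + 1 + 2 = n + 3 from rfl] at *
    set W : K := d (a n) / a n - d (a (n + 1)) / a (n + 1) with hWdef
    set V : K := d (a (n + 1)) / a (n + 1) - d (a (n + 2)) / a (n + 2) with hVdef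
    set U : K := d (a (n + 2)) / a (n + 2) - d (a (n + 3)) / a (n + 3) with hUdef
    set ρ : K := a (n + 2) * a n / a (n + 1) ^ 2 with hρdef
    set R2 : K := a (n + 3) * a (n + 1) / a (n + 2) ^ 2 with hR2def
    have hρ0 : ρ ≠ 0 := by
      rw [hρdef]
      exact div_ne_zero (mul_ne_zero (ha _) (ha _)) (pow_ne_zero _ (ha _))
    have hR20 : R2 ≠ 0 := by
      rw [hR2def]
      exact div_ne_zero (mul_ne_zero (ha _) (ha _)) (pow_ne_zero _ (ha _))
    have hk0 : d (2 * (n : K) + 1) = 0 := yv_dconst d n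
    -- logarithmic derivative of ρ and R2
    have h1 : d ρ = ρ * (W - V) := by
      rw [hρdef, yv_dlog3 d _ _ _ (ha _) (ha _) (ha _), hWdef, hVdef]
      ring
    have h4 : d R2 = R2 * (V - U) := by
      rw [hR2def, yv_dlog3 d _ _ _ (ha _) (ha _) (ha _), hVdef, hUdef]
      ring
    -- solve B(n) for V
    have hV : V = -W - (2 * (n : K) + 1) / ρ := by linear_combination ihB
    have h3 : d ρ = 2 * W * ρ + (2 * (n : K) + 1) := by
      rw [h1, hV]
      field_simp [hρ0]
      ring
    have hdV : d V = -d W + (2 * (n : K) + 1) * d ρ / ρ ^ 2 := by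
      conv_lhs => rw [hV]
      rw [map_sub, map_neg, yv_ddiv, hk0]
      ring
    have hddρ : d (d ρ) = 2 * (W * d ρ + ρ * d W) := by
      conv_lhs => rw [h3]
      rw [show (2 : K) * W * ρ + (2 * (n : K) + 1)
          = (W * ρ + W * ρ) + (2 * (n : K) + 1) from by ring]
      rw [map_add, map_add, hk0, yv_dmul]
      ring
    have hddV : d (d V) = -d (d W)
        + ((2 * (n : K) + 1) * d (d ρ) * ρ ^ 2
            - (2 * (n : K) + 1) * d ρ * (2 * ρ * d ρ)) / (ρ ^ 2) ^ 2 := by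
      conv_lhs => rw [hdV]
      rw [map_add, map_neg, yv_ddiv, yv_dmul, hk0, yv_dsq]
      ring
    -- the x-substitution coming from A(n)
    have hxval : x = ρ - 2 * d W - 2 * W ^ 2 := by linear_combination ihA
    -- difference of consecutive Toda relations
    have hdVsplit : d V = d (d (a (n + 1)) / a (n + 1)) - d (d (a (n + 2)) / a (n + 2)) := by
      rw [hVdef]; exact map_sub d _ _
    have t1 := hToda2 n
    have t2 := hToda2 (n + 1)
    simp only [show n + 1 + 1 = n + 2 from rfl, show n + 1 + 2 = n + 3 from rfl] at t2
    rw [← hρdef] at t1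
    rw [← hR2def] at t2
    have hRdiff : R2 = ρ + 4 * d V := by
      rw [hdVsplit]
      linear_combination t2 - t1
    -- A(n+1)
    have hA' : 2 * d V + 2 * V ^ 2 + x = R2 := by
      rw [hRdiff, hdV, hV, h3, hxval]
      field_simp [hρ0]
      ring
    -- Π(n+1)
    have hP' : d (d V) = 2 * V ^ 3 + x * V + ((n : K) + 1) := by
      rw [hddV, hddρ, ihP, h3, hV, hxval]
      field_simp [hρ0]
      ring
    -- B(n+1)
    have hdR2 : d R2 = 2 * d (d V) + 4 * V * d V + 1 := by
      conv_lhs => rw [← hA']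
      rw [show 2 * d V + 2 * V ^ 2 + x = (d V + d V + (V * V + V * V)) + x from by ring,
        map_add, map_add, map_add, map_add, yv_dmul, hdx]
      ring
    have hdR2' : d R2 = 2 * V * R2 + (2 * (n : K) + 3) := by
      rw [hdR2, hP']
      linear_combination 2 * V * hA'
    have hB' : V + U = -(2 * ((n : K) + 1) + 1) / R2 := by
      have key : R2 * (V - U) = 2 * V * R2 + (2 * (n : K) + 3) := by rw [← h4, hdR2']
      field_simp [hR20]
      linear_combination -key
    refine ⟨?_, ?_, ?_⟩
    · push_cast
      exact hA'
    · push_cast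
      exact hB'
    · push_cast
      exact hP'

end PainleveAux

/-- The shifted sequence `P 0 = 1`, `P (k+1) = Q k`. -/
private noncomputable def yvP (Q : ℕ → Polynomial ℚ) : ℕ → Polynomial ℚ
  | 0 => 1
  | (k + 1) => Q k

/-- For every `n ≥ 1`, the rational function `w_n = Q_{n-1}'/Q_{n-1} - Q_n'/Q_n`
satisfies the second Painlevé equation `w_n'' = 2 w_n³ + z w_n + n`, where the
derivative on the field of rational functions is the (unique) derivation
extending differentiation of polynomials. -/
theorem yablonskii_vorobev_solves_painleveII
    (Q : ℕ → Polynomial ℚ)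
    (hQ0 : Q 0 = 1) (hQ1 : Q 1 = X)
    (hQrec : ∀ n : ℕ, Q (n + 2) * Q n =
      X * (Q (n + 1)) ^ 2 -
        4 * (Q (n + 1) * derivative (derivative (Q (n + 1))) -
              (derivative (Q (n + 1))) ^ 2))
    (d : Derivation ℚ (RatFunc ℚ) (RatFunc ℚ))
    (hd : ∀ p : Polynomial ℚ,
      d (algebraMap (Polynomial ℚ) (RatFunc ℚ) p) =
        algebraMap (Polynomial ℚ) (RatFunc ℚ) (derivative p)) :
    ∀ n : ℕ, 1 ≤ n →
      let w : RatFunc ℚ :=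
        algebraMap (Polynomial ℚ) (RatFunc ℚ) (derivative (Q (n - 1))) /
            algebraMap (Polynomial ℚ) (RatFunc ℚ) (Q (n - 1)) -
          algebraMap (Polynomial ℚ) (RatFunc ℚ) (derivative (Q n)) /
            algebraMap (Polynomial ℚ) (RatFunc ℚ) (Q n)
      d (d w) = 2 * w ^ 3 + algebraMap (Polynomial ℚ) (RatFunc ℚ) X * w + (n : RatFunc ℚ) := by
  -- every Q n is monic, hence nonzero
  have hmQ : ∀ n, (Q n).Monic := by
    have H : ∀ n, (Q n).Monic ∧ (Q (n + 1)).Monic := by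
      intro n
      induction n with
      | zero => exact ⟨hQ0.symm ▸ monic_one, hQ1.symm ▸ monic_X⟩
      | succ m ih =>
        refine ⟨ih.2, ?_⟩
        set b : Polynomial ℚ := Q (m + 1) with hb
        have hbm : b.Monic := ih.2
        have h1 : (X * b ^ 2).Monic := monic_X.mul (hbm.pow 2)
        have hDb : b.degree = ((b.natDegree : ℕ) : WithBot ℕ) := degree_eq_natDegree hbm.ne_zero
        have hbb : (b * derivative (derivative b)).degree ≤ b.degree + b.degree :=
          degree_mul_le _ _ |>.trans
            (add_le_add le_rfl (degree_derivative_le.trans degree_derivative_le))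
        have hb2 : ((derivative b) ^ 2).degree ≤ b.degree + b.degree := by
          rw [pow_two]
          exact degree_mul_le _ _ |>.trans
            (add_le_add degree_derivative_le degree_derivative_le)
        have hsub : (b * derivative (derivative b) - (derivative b) ^ 2).degree
            ≤ b.degree + b.degree := (degree_sub_le _ _).trans (max_le hbb hb2)
        have h40 : ((4 : Polynomial ℚ)).degree ≤ 0 := by
          rw [show (4 : Polynomial ℚ) = C 4 from (map_ofNat C 4).symm]
          exact degree_C_le
        have h4 : ((4 : Polynomial ℚ) *
            (b * derivative (derivative b) - (derivative b) ^ 2)).degree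
            ≤ b.degree + b.degree :=
          (degree_mul_le _ _).trans (by simpa using add_le_add h40 hsub)
        have hXb : (X * b ^ 2).degree = 1 + (b.degree + b.degree) := by
          rw [degree_mul, degree_X, degree_pow, two_smul]
        have hlt : ((4 : Polynomial ℚ) *
            (b * derivative (derivative b) - (derivative b) ^ 2)).degree
            < (X * b ^ 2).degree := by
          refine h4.trans_lt ?_
          rw [hXb, hDb]
          have hnn : (b.natDegree + b.natDegree : ℕ) < 1 + (b.natDegree + b.natDegree) := by
            omega
          exact_mod_cast hnn
        have hM : (X * b ^ 2 -
            4 * (b * derivative (derivative b) - (derivative b) ^ 2)).Monic := by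
          have := h1.add_of_left (q := -(4 * (b * derivative (derivative b)
            - (derivative b) ^ 2))) (by rwa [degree_neg])
          simpa [sub_eq_add_neg] using this
        have hmul : (Q (m + 2) * Q m).Monic := by
          rw [hQrec m]
          exact hM
        exact Monic.of_mul_monic_right ih.1 hmul
    exact fun n => (H n).1
  have hQne : ∀ n, Q n ≠ 0 := fun n => (hmQ n).ne_zero
  set ι := algebraMap (Polynomial ℚ) (RatFunc ℚ) with hι
  set P : ℕ → Polynomial ℚ := yvP Q with hP
  have hP0 : P 0 = 1 := rfl
  have hPS : ∀ k, P (k + 1) = Q k := fun k => rfl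
  set a : ℕ → RatFunc ℚ := fun k => ι (P k) with ha_def
  have hane : ∀ k, a k ≠ 0 := by
    intro k
    cases k with
    | zero => show ι 1 ≠ 0; simp
    | succ j =>
      show ι (Q j) ≠ 0
      exact RatFunc.algebraMap_ne_zero (hQne j)
  have ha0 : a 0 = 1 := by show ι 1 = 1; simp
  have ha1 : a 1 = 1 := by show ι (Q 0) = 1; rw [hQ0]; simp
  have ha2 : a 2 = ι X := by show ι (Q 1) = ι X; rw [hQ1]
  have hdx : d (ι X) = 1 := by rw [hd]; simp
  have hTK : ∀ k, a (k + 2) * a k =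
      ι X * a (k + 1) ^ 2 - 4 * (a (k + 1) * d (d (a (k + 1))) - d (a (k + 1)) ^ 2) := by
    intro k
    cases k with
    | zero =>
      rw [ha0, ha1, ha2]
      simp [d.map_one_eq_zero]
    | succ m =>
      have h := congrArg ι (hQrec m)
      simp only [map_mul, map_sub, map_pow, map_ofNat] at h
      have e2 : a (m + 1 + 2) = ι (Q (m + 2)) := rfl
      have e1 : a (m + 1 + 1) = ι (Q (m + 1)) := rfl
      have e0 : a (m + 1) = ι (Q m) := rfl
      rw [e2, e1, e0, hd, hd]
      exact h
  have H := yv_main d (ι X) hdx a hane ha0 ha1 ha2 hTK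
  intro n hn
  obtain ⟨m, rfl⟩ : ∃ m, n = m + 1 := ⟨n - 1, (Nat.succ_pred_eq_of_pos hn).symm⟩
  intro w
  have hw : w = d (a (m + 1)) / a (m + 1) - d (a (m + 2)) / a (m + 2) := by
    show ι (derivative (Q (m + 1 - 1))) / ι (Q (m + 1 - 1))
        - ι (derivative (Q (m + 1))) / ι (Q (m + 1)) = _
    have e1 : a (m + 1) = ι (Q m) := rfl
    have e2 : a (m + 2) = ι (Q (m + 1)) := rfl
    rw [e1, e2, hd, hd]
    norm_num
  rw [hw]
  have := (H (m + 1)).2.2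
  simp only [show m + 1 + 1 = m + 2 from rfl] at this
  rw [this]
end

section
/- For every integer n ≥ 1, the third power sum of the roots of the Yablonskii–Vorob'ev polynomial Q_n equals s_{n,3} = −(1/2) n (n² − 1)(n + 2). -/
open Polynomial

/- paste helpers from main.lean -/
private def dd : ℕ → ℕ
  | 0 => 0
  | n+1 => dd n + (n+1)

private def cc (n : ℕ) : ℚ := (n : ℚ) * ((n : ℚ)^2 - 1) * ((n : ℚ) + 2) / 6

private lemma dd_succ (n : ℕ) : dd (n+1) = dd n + (n+1) := rfl

private lemma dd_cast (n : ℕ) : ((dd n : ℚ)) = (n : ℚ) * ((n : ℚ) + 1) / 2 := by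
  induction n with
  | zero => simp [dd]
  | succ n ih => rw [dd_succ]; push_cast [ih]; ring

private lemma cc_rec (n : ℕ) :
    cc (n+2) = 2 * cc (n+1) + 4 * ((dd (n+1) : ℚ)) - cc n := by
  rw [dd_cast]; unfold cc; push_cast; ring

private lemma dd_ge (n : ℕ) : n ≤ dd n := by
  induction n with
  | zero => simp [dd]
  | succ n ih => rw [dd_succ]; omega

private lemma dd_ge3 (k : ℕ) : 3 ≤ dd (k+2) := by
  have := dd_ge (k+1); rw [dd_succ]; omega

variable {F : Type*} [Field F]

private lemma deg_le_of_lt {p : F[X]} {m n : ℕ} (h : p.degree < (m : WithBot ℕ))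
    (hmn : m ≤ n + 1) : p.degree ≤ (n : WithBot ℕ) := by
  rcases eq_or_ne p 0 with rfl | hp0
  · simp
  rw [degree_eq_natDegree hp0] at *
  have : p.natDegree < m := by exact_mod_cast h
  exact_mod_cast by omega

private lemma deg_mul_le' {p q : F[X]} {a b n : ℕ} (hp : p.degree ≤ (a : WithBot ℕ))
    (hq : q.degree ≤ (b : WithBot ℕ)) (hab : a + b ≤ n) :
    (p * q).degree ≤ (n : WithBot ℕ) := by
  refine le_trans (degree_mul_le p q) ?_
  calc p.degree + q.degree ≤ (a : WithBot ℕ) + (b : WithBot ℕ) := add_le_add hp hq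
  _ = ((a + b : ℕ) : WithBot ℕ) := by push_cast; rfl
  _ ≤ (n : WithBot ℕ) := by exact_mod_cast hab

private lemma deg_add_le' {p q : F[X]} {n : WithBot ℕ} (hp : p.degree ≤ n)
    (hq : q.degree ≤ n) : (p + q).degree ≤ n :=
  le_trans (degree_add_le p q) (max_le hp hq)

private lemma deg_mul_lt {p q : F[X]} {a b n : ℕ} (hp : p.degree ≤ (a : WithBot ℕ))
    (hq : q.degree < (b : WithBot ℕ)) (hab : a + b ≤ n) :
    (p * q).degree < (n : WithBot ℕ) := by
  rcases eq_or_ne q 0 with rfl | hq0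
  · rw [mul_zero, degree_zero]; exact WithBot.bot_lt_coe _
  rcases eq_or_ne p 0 with rfl | hp0
  · rw [zero_mul, degree_zero]; exact WithBot.bot_lt_coe _
  refine lt_of_le_of_lt (degree_mul_le p q) ?_
  rw [degree_eq_natDegree hp0, degree_eq_natDegree hq0] at *
  have h1 : p.natDegree ≤ a := by exact_mod_cast hp
  have h2 : q.natDegree < b := by exact_mod_cast hq
  exact_mod_cast by omega

private lemma deg_add_lt {p q : F[X]} {n : WithBot ℕ} (hp : p.degree < n)
    (hq : q.degree < n) : (p + q).degree < n :=
  lt_of_le_of_lt (degree_add_le p q) (max_lt hp hq)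

private lemma deg_C_mul_pow_lt (r : F) {m n : ℕ} (h : m < n) :
    (C r * X ^ m : F[X]).degree < (n : WithBot ℕ) :=
  lt_of_le_of_lt (degree_C_mul_X_pow_le m r) (by exact_mod_cast h)

private lemma deg_C_mul_pow_le (r : F) {m n : ℕ} (h : m ≤ n) :
    (C r * X ^ m : F[X]).degree ≤ (n : WithBot ℕ) :=
  le_trans (degree_C_mul_X_pow_le m r) (by exact_mod_cast h)

private lemma deg_X_pow_le {m n : ℕ} (h : m ≤ n) :
    ((X : F[X]) ^ m).degree ≤ (n : WithBot ℕ) :=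
  le_trans (degree_X_pow m).le (by exact_mod_cast h)

private lemma deg_two : degree (2 : ℚ[X]) ≤ ((0:ℕ) : WithBot ℕ) := by
  simpa using degree_natCast_le (R := ℚ) 2

private lemma deg_four : degree (4 : ℚ[X]) ≤ ((0:ℕ) : WithBot ℕ) := by
  simpa using degree_natCast_le (R := ℚ) 4

private lemma deg_eight : degree (8 : ℚ[X]) ≤ ((0:ℕ) : WithBot ℕ) := by
  simpa using degree_natCast_le (R := ℚ) 8

private lemma deg_neg4 : degree ((-4) : ℚ[X]) ≤ ((0:ℕ) : WithBot ℕ) := by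
  rw [show ((-4 : ℚ[X])) = -(4 : ℚ[X]) by norm_num, degree_neg]; exact deg_four

private lemma deg_X_le' : degree (X : ℚ[X]) ≤ ((1:ℕ) : WithBot ℕ) := by
  exact_mod_cast degree_X_le

private lemma deg_C_le' (r : F) : degree (C r) ≤ ((0:ℕ) : WithBot ℕ) := by
  exact_mod_cast degree_C_le

private def Pr (Q : ℕ → ℚ[X]) (n : ℕ) : Prop :=
  ∃ R : ℚ[X], Q n = X ^ dd n + C (cc n) * X ^ (dd n - 3) + R ∧
    R.degree < ((dd n - 3 : ℕ) : WithBot ℕ)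

private lemma key_identity (u k : ℕ) (a b c4 : ℚ) (P A RA RB : ℚ[X])
    (hA : A = X ^ (u+3) + C a * X ^ u + RA)
    (hrec : P * A = X * (X ^ (u+k+6) + C b * X ^ (u+k+3) + RB) ^ 2 -
      4 * ((X ^ (u+k+6) + C b * X ^ (u+k+3) + RB) *
            (C ((u:ℚ)+k+6) * (C ((u:ℚ)+k+5) * X ^ (u+k+4)) +
             C b * (C ((u:ℚ)+k+3) * (C ((u:ℚ)+k+2) * X ^ (u+k+1))) +
             derivative (derivative RB)) -
           (C ((u:ℚ)+k+6) * X ^ (u+k+5) +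
            C b * (C ((u:ℚ)+k+3) * X ^ (u+k+2)) + derivative RB) ^ 2))
    (hc : c4 = 2 * b + 4 * ((u:ℚ)+k+6) - a) :
    (P - X ^ (u+2*k+10) - C c4 * X ^ (u+2*k+7)) * A =
      C (b^2 - 4*b*(((u:ℚ)+k+3)*((u:ℚ)+k+2)+((u:ℚ)+k+6)*((u:ℚ)+k+5))
          + 8*b*((u:ℚ)+k+6)*((u:ℚ)+k+3) - (2*b+4*((u:ℚ)+k+6)-a)*a) * X ^ (2*u+2*k+7)
      + C (-4*b^2*((u:ℚ)+k+3)*((u:ℚ)+k+2) + 4*b^2*((u:ℚ)+k+3)^2) * X ^ (2*u+2*k+4)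
      + (2 * X * (X ^ (u+k+6) + C b * X ^ (u+k+3))) * RB
      + (X * RB) * RB
      + ((-4) * (X ^ (u+k+6) + C b * X ^ (u+k+3))) * derivative (derivative RB)
      + ((-4) * (C ((u:ℚ)+k+6) * (C ((u:ℚ)+k+5) * X ^ (u+k+4)) +
             C b * (C ((u:ℚ)+k+3) * (C ((u:ℚ)+k+2) * X ^ (u+k+1))))) * RB
      + ((-4) * RB) * derivative (derivative RB)
      + (8 * (C ((u:ℚ)+k+6) * X ^ (u+k+5) +
            C b * (C ((u:ℚ)+k+3) * X ^ (u+k+2)))) * derivative RB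
      + (4 * derivative RB) * derivative RB
      + (-(X ^ (u+2*k+10))) * RA
      + (-(C c4 * X ^ (u+2*k+7))) * RA := by
  rw [sub_mul, sub_mul, hrec, hA, hc]
  simp only [C_add, C_sub, C_mul, C_pow, map_ofNat, Polynomial.C_neg]
  ring

private lemma step (Q : ℕ → Polynomial ℚ)
    (hQrec : ∀ n : ℕ, Q (n + 2) * Q n =
      X * (Q (n + 1)) ^ 2 -
        4 * (Q (n + 1) * derivative (derivative (Q (n + 1))) -
              (derivative (Q (n + 1))) ^ 2))
    (k : ℕ) (h1 : Pr Q (k+2)) (h2 : Pr Q (k+3)) : Pr Q (k+4) := by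
  obtain ⟨RA, hA, hRA⟩ := h1
  obtain ⟨RB, hB, hRB⟩ := h2
  obtain ⟨u, hu⟩ : ∃ u, dd (k+2) = u + 3 := ⟨dd (k+2) - 3, by have := dd_ge3 k; omega⟩
  have hdd3 : dd (k+3) = u + k + 6 := by rw [dd_succ, hu]; omega
  have hdd4 : dd (k+4) = u + 2*k + 10 := by rw [dd_succ, hdd3]; omega
  rw [hu, Nat.add_sub_cancel] at hA hRA
  rw [hdd3, show u+k+6-3 = u+k+3 from by omega] at hB hRB
  have hB1 : derivative (Q (k+3)) =
      C ((u:ℚ)+k+6) * X ^ (u+k+5) + C (cc (k+3)) * (C ((u:ℚ)+k+3) * X ^ (u+k+2))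
        + derivative RB := by
    rw [hB]
    simp only [derivative_add, derivative_C_mul, derivative_X_pow]
    rw [show u+k+6-1 = u+k+5 from by omega, show u+k+3-1 = u+k+2 from by omega]
    push_cast
    ring
  have hB2 : derivative (derivative (Q (k+3))) =
      C ((u:ℚ)+k+6) * (C ((u:ℚ)+k+5) * X ^ (u+k+4)) +
        C (cc (k+3)) * (C ((u:ℚ)+k+3) * (C ((u:ℚ)+k+2) * X ^ (u+k+1))) +
        derivative (derivative RB) := by
    rw [hB1]
    simp only [derivative_add, derivative_C_mul, derivative_X_pow]
    rw [show u+k+5-1 = u+k+4 from by omega, show u+k+2-1 = u+k+1 from by omega]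
    push_cast
    ring
  have hrec := hQrec (k+2)
  rw [show k+2+2 = k+4 from by omega, show k+2+1 = k+3 from by omega] at hrec
  rw [hB2, hB1, hB] at hrec
  have hc : cc (k+4) = 2 * cc (k+3) + 4 * ((u:ℚ)+k+6) - cc (k+2) := by
    have h := cc_rec (k+2)
    rw [show k+2+2 = k+4 from by omega, show k+2+1 = k+3 from by omega, hdd3] at h
    rw [h]; push_cast; ring
  have key := key_identity u k (cc (k+2)) (cc (k+3)) (cc (k+4)) (Q (k+4)) (Q (k+2))
    RA RB hA hrec hc
  -- degree bounds
  have hRBle : RB.degree ≤ ((u+k+2 : ℕ) : WithBot ℕ) := deg_le_of_lt hRB (by omega)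
  have hRB1 : (derivative RB).degree < ((u+k+3:ℕ) : WithBot ℕ) :=
    lt_of_le_of_lt degree_derivative_le hRB
  have hRB1le : (derivative RB).degree ≤ ((u+k+2 : ℕ) : WithBot ℕ) := deg_le_of_lt hRB1 (by omega)
  have hRB2 : (derivative (derivative RB)).degree < ((u+k+3:ℕ) : WithBot ℕ) :=
    lt_of_le_of_lt degree_derivative_le hRB1
  have hM : degree ((X:ℚ[X]) ^ (u+k+6) + C (cc (k+3)) * X ^ (u+k+3)) ≤ ((u+k+6:ℕ) : WithBot ℕ) :=
    deg_add_le' (deg_X_pow_le (by omega)) (deg_C_mul_pow_le _ (by omega))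
  have hm1 : degree (C ((u:ℚ)+k+6) * X ^ (u+k+5) +
      C (cc (k+3)) * (C ((u:ℚ)+k+3) * X ^ (u+k+2))) ≤ ((u+k+5:ℕ) : WithBot ℕ) :=
    deg_add_le' (deg_C_mul_pow_le _ (by omega))
      (deg_mul_le' (n := u+k+5) (deg_C_le' _) (deg_C_mul_pow_le _ (show u+k+2 ≤ u+k+5 by omega)) (by omega))
  have hm2 : degree (C ((u:ℚ)+k+6) * (C ((u:ℚ)+k+5) * X ^ (u+k+4)) +
      C (cc (k+3)) * (C ((u:ℚ)+k+3) * (C ((u:ℚ)+k+2) * X ^ (u+k+1)))) ≤ ((u+k+4:ℕ) : WithBot ℕ) :=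
    deg_add_le' (deg_mul_le' (n := u+k+4) (deg_C_le' _) (deg_C_mul_pow_le _ (le_refl (u+k+4))) (by omega))
      (deg_mul_le' (n := u+k+4) (deg_C_le' _)
        (deg_mul_le' (n := u+k+4) (deg_C_le' _) (deg_C_mul_pow_le _ (show u+k+1 ≤ u+k+4 by omega)) (by omega)) (by omega))
  have T1 : (C (cc (k+3)^2 - 4*cc (k+3)*(((u:ℚ)+k+3)*((u:ℚ)+k+2)+((u:ℚ)+k+6)*((u:ℚ)+k+5))
          + 8*cc (k+3)*((u:ℚ)+k+6)*((u:ℚ)+k+3) - (2*cc (k+3)+4*((u:ℚ)+k+6)-cc (k+2))*cc (k+2))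
        * X ^ (2*u+2*k+7) : ℚ[X]).degree < ((2*u+2*k+10 : ℕ) : WithBot ℕ) :=
    deg_C_mul_pow_lt _ (by omega)
  have T2 : (C (-4*cc (k+3)^2*((u:ℚ)+k+3)*((u:ℚ)+k+2) + 4*cc (k+3)^2*((u:ℚ)+k+3)^2)
        * X ^ (2*u+2*k+4) : ℚ[X]).degree < ((2*u+2*k+10 : ℕ) : WithBot ℕ) :=
    deg_C_mul_pow_lt _ (by omega)
  have T3 : Polynomial.degree ((2 * X * ((X:ℚ[X]) ^ (u+k+6) + C (cc (k+3)) * X ^ (u+k+3))) * RB)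
      < ((2*u+2*k+10 : ℕ) : WithBot ℕ) :=
    deg_mul_lt (a := u+k+7) (deg_mul_le' (n := u+k+7) (deg_mul_le' (n := 1) deg_two deg_X_le' (by omega)) hM (by omega))
      hRB (by omega)
  have T4 : Polynomial.degree ((X * RB) * RB) < ((2*u+2*k+10 : ℕ) : WithBot ℕ) :=
    deg_mul_lt (a := u+k+3) (deg_mul_le' (n := u+k+3) deg_X_le' hRBle (by omega)) hRB (by omega)
  have T5 : Polynomial.degree (((-4) * ((X:ℚ[X]) ^ (u+k+6) + C (cc (k+3)) * X ^ (u+k+3)))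
      * derivative (derivative RB)) < ((2*u+2*k+10 : ℕ) : WithBot ℕ) :=
    deg_mul_lt (a := u+k+6) (deg_mul_le' (n := u+k+6) deg_neg4 hM (by omega)) hRB2 (by omega)
  have T6 : Polynomial.degree (((-4) * (C ((u:ℚ)+k+6) * (C ((u:ℚ)+k+5) * X ^ (u+k+4)) +
        C (cc (k+3)) * (C ((u:ℚ)+k+3) * (C ((u:ℚ)+k+2) * X ^ (u+k+1))))) * RB)
      < ((2*u+2*k+10 : ℕ) : WithBot ℕ) :=
    deg_mul_lt (a := u+k+4) (deg_mul_le' (n := u+k+4) deg_neg4 hm2 (by omega)) hRB (by omega)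
  have T7 : Polynomial.degree (((-4) * RB) * derivative (derivative RB)) < ((2*u+2*k+10 : ℕ) : WithBot ℕ) :=
    deg_mul_lt (a := u+k+2) (deg_mul_le' (n := u+k+2) deg_neg4 hRBle (by omega)) hRB2 (by omega)
  have T8 : Polynomial.degree ((8 * (C ((u:ℚ)+k+6) * X ^ (u+k+5) +
        C (cc (k+3)) * (C ((u:ℚ)+k+3) * X ^ (u+k+2)))) * derivative RB) < ((2*u+2*k+10 : ℕ) : WithBot ℕ) :=
    deg_mul_lt (a := u+k+5) (deg_mul_le' (n := u+k+5) deg_eight hm1 (by omega)) hRB1 (by omega)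
  have T9 : Polynomial.degree ((4 * derivative RB) * derivative RB) < ((2*u+2*k+10 : ℕ) : WithBot ℕ) :=
    deg_mul_lt (a := u+k+2) (deg_mul_le' (n := u+k+2) deg_four hRB1le (by omega)) hRB1 (by omega)
  have T10 : Polynomial.degree ((-((X:ℚ[X]) ^ (u+2*k+10))) * RA) < ((2*u+2*k+10 : ℕ) : WithBot ℕ) :=
    deg_mul_lt (a := u+2*k+10) (by rw [degree_neg]; exact deg_X_pow_le (le_refl _)) hRA (by omega)
  have T11 : Polynomial.degree ((-(C (cc (k+4)) * (X:ℚ[X]) ^ (u+2*k+7))) * RA) < ((2*u+2*k+10 : ℕ) : WithBot ℕ) :=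
    deg_mul_lt (a := u+2*k+7) (by rw [degree_neg]; exact deg_C_mul_pow_le _ (le_refl _)) hRA (by omega)
  have hT : degree ((Q (k+4) - X ^ (u+2*k+10) - C (cc (k+4)) * X ^ (u+2*k+7)) * Q (k+2))
      < ((2*u+2*k+10 : ℕ) : WithBot ℕ) := by
    rw [key]
    exact deg_add_lt (deg_add_lt (deg_add_lt (deg_add_lt (deg_add_lt (deg_add_lt
      (deg_add_lt (deg_add_lt (deg_add_lt (deg_add_lt T1 T2) T3) T4) T5) T6) T7) T8) T9)
      T10) T11
  have hdegA : (Q (k+2)).degree = ((u+3:ℕ) : WithBot ℕ) := by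
    rw [hA, add_assoc, degree_add_eq_left_of_degree_lt, degree_X_pow]
    rw [degree_X_pow]
    exact deg_add_lt (deg_C_mul_pow_lt _ (by omega))
      (lt_of_lt_of_le hRA (by exact_mod_cast by omega))
  have hRP : (Q (k+4) - X ^ (u+2*k+10) - C (cc (k+4)) * X ^ (u+2*k+7)).degree
      < ((u+2*k+7 : ℕ) : WithBot ℕ) := by
    rw [degree_mul, hdegA] at hT
    rcases eq_or_ne (Q (k+4) - X ^ (u+2*k+10) - C (cc (k+4)) * X ^ (u+2*k+7)) 0 with h0 | h0
    · rw [h0, degree_zero]; exact WithBot.bot_lt_coe _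
    rw [degree_eq_natDegree h0] at *
    have : ((Q (k+4) - X ^ (u+2*k+10) - C (cc (k+4)) * X ^ (u+2*k+7)).natDegree + (u+3) : ℕ)
        < 2*u+2*k+10 := by exact_mod_cast hT
    exact_mod_cast by omega
  refine ⟨Q (k+4) - X ^ (u+2*k+10) - C (cc (k+4)) * X ^ (u+2*k+7), ?_, ?_⟩
  · rw [hdd4, show u+2*k+10-3 = u+2*k+7 from by omega]; ring
  · rw [hdd4, show u+2*k+10-3 = u+2*k+7 from by omega]; exact hRP

private lemma struct (Q : ℕ → Polynomial ℚ)
    (hQ0 : Q 0 = 1) (hQ1 : Q 1 = X)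
    (hQrec : ∀ n : ℕ, Q (n + 2) * Q n =
      X * (Q (n + 1)) ^ 2 -
        4 * (Q (n + 1) * derivative (derivative (Q (n + 1))) -
              (derivative (Q (n + 1))) ^ 2)) :
    ∀ n : ℕ, Pr Q n := by
  have hQ2 : Q 2 = X ^ 3 + C 4 := by
    have h := hQrec 0
    rw [hQ0, hQ1, mul_one] at h
    rw [h]
    simp only [derivative_X, derivative_one]
    simp only [map_ofNat]
    ring
  have hQ3 : Q 3 = X ^ 6 + C 20 * X ^ 3 + C (-80) := by
    have h := hQrec 1
    rw [hQ1, hQ2] at h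
    have h2 : (X ^ 6 + C (20:ℚ) * X ^ 3 + C (-80)) * X =
        X * (X ^ 3 + C (4:ℚ)) ^ 2 -
          4 * ((X ^ 3 + C (4:ℚ)) * derivative (derivative (X ^ 3 + C (4:ℚ))) -
            (derivative (X ^ 3 + C (4:ℚ))) ^ 2) := by
      simp only [derivative_add, derivative_C, derivative_X_pow]
      norm_num
      simp only [map_ofNat]
      ring
    exact mul_right_cancel₀ X_ne_zero (h.trans h2.symm)
  have pr0 : Pr Q 0 := by
    refine ⟨0, ?_, ?_⟩
    · rw [hQ0]
      norm_num [dd, cc]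
    · rw [degree_zero]; exact WithBot.bot_lt_coe _
  have pr1 : Pr Q 1 := by
    refine ⟨0, ?_, ?_⟩
    · rw [hQ1]
      have h1 : dd 1 = 1 := rfl
      have h2 : cc 1 = 0 := by norm_num [cc]
      rw [h1, h2]
      norm_num
    · rw [degree_zero]; exact WithBot.bot_lt_coe _
  have pr2 : Pr Q 2 := by
    refine ⟨0, ?_, ?_⟩
    · rw [hQ2]
      have h1 : dd 2 = 3 := rfl
      have h2 : cc 2 = 4 := by norm_num [cc]
      rw [h1, h2]
      norm_num
    · rw [degree_zero]; exact WithBot.bot_lt_coe _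
  have pr3 : Pr Q 3 := by
    refine ⟨C (-80), ?_, ?_⟩
    · rw [hQ3]
      have h1 : dd 3 = 6 := rfl
      have h2 : cc 3 = 20 := by norm_num [cc]
      rw [h1, h2]
    · refine lt_of_le_of_lt degree_C_le ?_
      have : dd 3 - 3 = 3 := rfl
      rw [this]
      exact_mod_cast Nat.zero_lt_succ 2
  have main : ∀ n : ℕ, Pr Q n ∧ Pr Q (n+1) := by
    intro n
    induction n with
    | zero => exact ⟨pr0, pr1⟩
    | succ n ih =>
      refine ⟨ih.2, ?_⟩
      match n with
      | 0 => exact pr2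
      | 1 => exact pr3
      | Nat.succ (Nat.succ k) => exact step Q hQrec k ih.1 ih.2
  exact fun n => (main n).1

private lemma my_esymm_cons (a : ℂ) (s : Multiset ℂ) (k : ℕ) :
    (a ::ₘ s).esymm (k+1) = s.esymm (k+1) + a * s.esymm k := by
  simp [Multiset.esymm, Multiset.powersetCard_cons, Multiset.map_map,
    Multiset.sum_map_mul_left]

private lemma my_esymm_one (s : Multiset ℂ) : s.esymm 1 = s.sum := by
  simp [Multiset.esymm, Multiset.powersetCard_one, Multiset.map_map]

private lemma cube_sum (s : Multiset ℂ) :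
    (s.map (· ^ 3)).sum = s.sum ^ 3 - 3 * s.sum * s.esymm 2 + 3 * s.esymm 3 := by
  induction s using Multiset.induction with
  | empty => simp [Multiset.esymm, Multiset.powersetCard_zero_right]
  | cons a s ih =>
    have h1 : (a ::ₘ s).esymm 2 = s.esymm 2 + a * s.esymm 1 := my_esymm_cons a s 1
    have h2 : (a ::ₘ s).esymm 3 = s.esymm 3 + a * s.esymm 2 := my_esymm_cons a s 2
    simp only [Multiset.map_cons, Multiset.sum_cons, h1, h2, my_esymm_one, ih]
    ring

/-- Explicit formula for the power sum `s_{n,3}` of the roots of the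
Yablonskii–Vorob'ev polynomial `Q n`. -/
theorem powerSum_three
    (Q : ℕ → Polynomial ℚ)
    (hQ0 : Q 0 = 1) (hQ1 : Q 1 = X)
    (hQrec : ∀ n : ℕ, Q (n + 2) * Q n =
      X * (Q (n + 1)) ^ 2 -
        4 * (Q (n + 1) * derivative (derivative (Q (n + 1))) -
              (derivative (Q (n + 1))) ^ 2)) :
    ∀ n : ℕ, 1 ≤ n →
      powerSum Q n 3 =
        -(1 / 2) * (n : ℂ) * ((n : ℂ) ^ 2 - 1) * ((n : ℂ) + 2) := by

  intro n hn
  rcases eq_or_lt_of_le hn with h1 | h2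
  · -- n = 1
    subst h1  -- careful: hn : 1 ≤ n, h1 : 1 = n
    unfold powerSum
    rw [hQ1, Polynomial.map_X, roots_X]
    norm_num
  · -- n ≥ 2
    have hn2 : 2 ≤ n := h2
    obtain ⟨R, hQn, hR⟩ := struct Q hQ0 hQ1 hQrec n
    obtain ⟨k, rfl⟩ : ∃ k, n = k + 2 := ⟨n - 2, by omega⟩
    obtain ⟨u, hu⟩ : ∃ u, dd (k+2) = u + 3 := ⟨dd (k+2) - 3, by have := dd_ge3 k; omega⟩
    rw [hu, Nat.add_sub_cancel] at hQn hR
    have hP : (Q (k+2)).map (algebraMap ℚ ℂ) =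
        X ^ (u+3) + C (algebraMap ℚ ℂ (cc (k+2))) * X ^ u + R.map (algebraMap ℚ ℂ) := by
      rw [hQn]
      simp [Polynomial.map_add, Polynomial.map_mul, Polynomial.map_pow,
        Polynomial.map_X, Polynomial.map_C]
    have hRm : (R.map (algebraMap ℚ ℂ)).degree < ((u:ℕ) : WithBot ℕ) :=
      lt_of_le_of_lt (degree_map_le) hR
    have hdeg : ((Q (k+2)).map (algebraMap ℚ ℂ)).degree = ((u+3 : ℕ) : WithBot ℕ) := by
      rw [hP, add_assoc, degree_add_eq_left_of_degree_lt, degree_X_pow]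
      rw [degree_X_pow]
      exact deg_add_lt (deg_C_mul_pow_lt _ (by omega))
        (lt_of_lt_of_le hRm (by exact_mod_cast by omega))
    have hmonic : ((Q (k+2)).map (algebraMap ℚ ℂ)).Monic := by
      rw [hP, add_assoc]
      exact monic_X_pow_add (by
        exact deg_add_lt (deg_C_mul_pow_lt _ (by omega))
          (lt_of_lt_of_le hRm (by exact_mod_cast by omega)))
    have hND : ((Q (k+2)).map (algebraMap ℚ ℂ)).natDegree = u+3 :=
      natDegree_eq_of_degree_eq_some hdeg
    have hcard : (((Q (k+2)).map (algebraMap ℚ ℂ)).roots).card =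
        ((Q (k+2)).map (algebraMap ℚ ℂ)).natDegree :=
      (splits_iff_card_roots).mp (IsAlgClosed.splits _)
    have hc2 : ((Q (k+2)).map (algebraMap ℚ ℂ)).coeff (u+2) = 0 := by
      rw [hP, coeff_add, coeff_add, coeff_X_pow, coeff_C_mul, coeff_X_pow,
        if_neg (by omega : ¬ u+2 = u+3), if_neg (by omega : ¬ u+2 = u),
        coeff_eq_zero_of_degree_lt (lt_of_lt_of_le hRm (by exact_mod_cast by omega))]
      ring
    have hc1 : ((Q (k+2)).map (algebraMap ℚ ℂ)).coeff (u+1) = 0 := by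
      rw [hP, coeff_add, coeff_add, coeff_X_pow, coeff_C_mul, coeff_X_pow,
        if_neg (by omega : ¬ u+1 = u+3), if_neg (by omega : ¬ u+1 = u),
        coeff_eq_zero_of_degree_lt (lt_of_lt_of_le hRm (by exact_mod_cast by omega))]
      ring
    have hc0 : ((Q (k+2)).map (algebraMap ℚ ℂ)).coeff u = algebraMap ℚ ℂ (cc (k+2)) := by
      rw [hP, coeff_add, coeff_add, coeff_X_pow, coeff_C_mul, coeff_X_pow,
        if_neg (by omega : ¬ u = u+3), if_pos rfl,
        coeff_eq_zero_of_degree_lt hRm]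
      ring
    have he1 : (((Q (k+2)).map (algebraMap ℚ ℂ)).roots).esymm 1 = 0 := by
      have h := coeff_eq_esymm_roots_of_card hcard
        (show u+2 ≤ ((Q (k+2)).map (algebraMap ℚ ℂ)).natDegree by rw [hND]; omega)
      rw [hND, show u+3-(u+2) = 1 from by omega, hc2, hmonic.leadingCoeff] at h
      linear_combination h
    have he2 : (((Q (k+2)).map (algebraMap ℚ ℂ)).roots).esymm 2 = 0 := by
      have h := coeff_eq_esymm_roots_of_card hcard
        (show u+1 ≤ ((Q (k+2)).map (algebraMap ℚ ℂ)).natDegree by rw [hND]; omega)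
      rw [hND, show u+3-(u+1) = 2 from by omega, hc1, hmonic.leadingCoeff] at h
      linear_combination -h
    have he3 : (((Q (k+2)).map (algebraMap ℚ ℂ)).roots).esymm 3 =
        - algebraMap ℚ ℂ (cc (k+2)) := by
      have h := coeff_eq_esymm_roots_of_card hcard
        (show u ≤ ((Q (k+2)).map (algebraMap ℚ ℂ)).natDegree by rw [hND]; omega)
      rw [hND, show u+3-u = 3 from by omega, hc0, hmonic.leadingCoeff] at h
      linear_combination h
    have hsum : (((Q (k+2)).map (algebraMap ℚ ℂ)).roots).sum = 0 := by
      rw [← my_esymm_one]; exact he1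
    unfold powerSum
    rw [cube_sum, hsum, he2, he3]
    have hcast : algebraMap ℚ ℂ (cc (k+2)) = ((cc (k+2) : ℚ) : ℂ) := eq_ratCast _ _
    rw [hcast]
    unfold cc
    push_cast
    ring
end

section
/- For every integer n ≥ 0, the coefficient A_{n,6} of the Yablonskii–Vorob'ev polynomial Q_n equals A_{n,6} = (1/72) n (n² − 1)(n² − 4)(n − 4)(n + 5)(n + 3). -/
open Polynomial Finset

def A3f (x : ℚ) : ℚ := (x-1)*x*(x+1)*(x+2)/6
def A6f (x : ℚ) : ℚ := x*(x^2-1)*(x^2-4)*(x-4)*(x+5)*(x+3)/72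

def GoodAt (P : ℚ[X]) (e n : ℕ) : Prop :=
  P.Monic ∧ P.natDegree = e + 6 ∧
  P.coeff (e+5) = 0 ∧ P.coeff (e+4) = 0 ∧ P.coeff (e+3) = A3f n ∧
  P.coeff (e+2) = 0 ∧ P.coeff (e+1) = 0 ∧ P.coeff e = A6f n

lemma conv (P R : ℚ[X]) (p r k : ℕ) (hP : P.natDegree ≤ p) (hR : R.natDegree ≤ r)
    (hkp : k ≤ p) (hkr : k ≤ r) :
    (P * R).coeff (p + r - k) =
      ∑ i ∈ Finset.range (k+1), P.coeff (p - i) * R.coeff (r - (k - i)) := by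
  rw [coeff_mul]
  have himg : ((Finset.range (k+1)).image (fun i => (p - i, r - (k - i)))) ⊆
      Finset.HasAntidiagonal.antidiagonal (p + r - k) := by
    intro x hx
    simp only [Finset.mem_image, Finset.mem_range] at hx
    obtain ⟨i, hi, rfl⟩ := hx
    simp only [Finset.HasAntidiagonal.mem_antidiagonal]
    omega
  have hzero : ∀ x ∈ Finset.HasAntidiagonal.antidiagonal (p + r - k),
      x ∉ ((Finset.range (k+1)).image (fun i => (p - i, r - (k - i)))) →
      P.coeff x.1 * R.coeff x.2 = 0 := by
    intro x hx hnx
    simp only [Finset.HasAntidiagonal.mem_antidiagonal] at hx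
    by_cases h1 : p < x.1
    · exact mul_eq_zero_of_left (coeff_eq_zero_of_natDegree_lt (lt_of_le_of_lt hP h1)) _
    · by_cases h2 : r < x.2
      · exact mul_eq_zero_of_right _ (coeff_eq_zero_of_natDegree_lt (lt_of_le_of_lt hR h2))
      · exfalso
        apply hnx
        simp only [Finset.mem_image, Finset.mem_range]
        refine ⟨p - x.1, by omega, ?_⟩
        have hx2 : x = (x.1, x.2) := rfl
        rw [hx2, Prod.mk.injEq]
        constructor <;> omega
  have hinj : ∀ a ∈ Finset.range (k+1), ∀ b ∈ Finset.range (k+1),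
      (fun i => (p - i, r - (k - i))) a = (fun i => (p - i, r - (k - i))) b → a = b := by
    intro a ha b hb hab
    simp only [Finset.mem_range] at ha hb
    have := congrArg Prod.fst hab
    simp only at this
    omega
  rw [← Finset.sum_subset himg hzero, Finset.sum_image hinj]

lemma convAB (P R : ℚ[X]) (pe re a b k : ℕ)
    (hP : P.natDegree ≤ pe + a) (hR : R.natDegree ≤ re + b)
    (hka : k ≤ a) (hkb : k ≤ b) :
    (P * R).coeff (pe + re + (a + b - k)) =
      ∑ i ∈ Finset.range (k+1), P.coeff (pe + (a - i)) * R.coeff (re + (b - (k - i))) := by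
  have h := conv P R (pe+a) (re+b) k hP hR (by omega) (by omega)
  have e0 : pe + re + (a + b - k) = (pe+a) + (re+b) - k := by omega
  rw [e0, h]
  apply Finset.sum_congr rfl
  intro i hi
  simp only [Finset.mem_range] at hi
  have e1 : pe + a - i = pe + (a - i) := by omega
  have e2 : re + b - (k - i) = re + (b - (k - i)) := by omega
  rw [e1, e2]

lemma step_s17 (P R S : ℚ[X]) (n pe qe re : ℕ)
    (hpe : 2*(pe+6) = n*(n+1)) (hqe : 2*(qe+6) = (n+1)*(n+2)) (hre : 2*(re+6) = (n+2)*(n+3))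
    (hrec : S * P = X * R^2 - 4 * (R * derivative (derivative R) - (derivative R)^2))
    (HP : GoodAt P pe n) (HR : GoodAt R qe (n+1)) :
    GoodAt S re (n+2) := by
  obtain ⟨hPm, hPd, hP5, hP4, hP3, hP2, hP1, hP0⟩ := HP
  obtain ⟨hRm, hRd, hR5, hR4, hR3, hR2, hR1, hR0⟩ := HR
  have hsum : pe + re = 2*qe + 1 := by
    have : n*(n+1) + (n+2)*(n+3) = 2*((n+1)*(n+2)) + 2 := by ring
    omega
  -- degrees of derivatives
  have hD1 : (derivative R).natDegree ≤ qe + 5 := by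
    have := natDegree_derivative_le R; omega
  have hD2 : (derivative (derivative R)).natDegree ≤ qe + 4 := by
    have h1 := natDegree_derivative_le R
    have h2 := natDegree_derivative_le (derivative R)
    omega
  -- RHS monic of natDegree 2qe+13
  have hm1 : (X * R^2).Monic := monic_X.mul (hRm.pow 2)
  have hd1 : (X * R^2).natDegree = 2*qe + 13 := by
    rw [natDegree_mul X_ne_zero (pow_ne_zero 2 hRm.ne_zero), natDegree_X, natDegree_pow, hRd]
    ring
  have hB : (4 * (R * derivative (derivative R) - (derivative R)^2) : ℚ[X]).natDegree ≤ 2*qe + 10 := by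
    have hb1 : (R * derivative (derivative R)).natDegree ≤ 2*qe + 10 := by
      have := natDegree_mul_le (p := R) (q := derivative (derivative R))
      omega
    have hb2 : ((derivative R)^2).natDegree ≤ 2*qe + 10 := by
      have := natDegree_pow_le (p := derivative R) (n := 2)
      omega
    have hb3 := natDegree_sub_le (R * derivative (derivative R)) ((derivative R)^2)
    have hb4 := natDegree_mul_le (p := (4 : ℚ[X]))
      (q := R * derivative (derivative R) - (derivative R)^2)
    have h40 : (4 : ℚ[X]).natDegree = 0 := natDegree_ofNat 4
    omega
  have hlt : (4 * (R * derivative (derivative R) - (derivative R)^2) : ℚ[X]).natDegree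
      < (X * R^2).natDegree := by omega
  have hRHSm : (X * R^2 - 4 * (R * derivative (derivative R) - (derivative R)^2)).Monic :=
    hm1.sub_of_left (degree_lt_degree hlt)
  have hRHSd : (X * R^2 - 4 * (R * derivative (derivative R) - (derivative R)^2)).natDegree
      = 2*qe + 13 := by
    rw [natDegree_sub_eq_left_of_natDegree_lt hlt, hd1]
  -- S is monic of natDegree re+6
  have hSm : S.Monic := by
    have hlc := congrArg leadingCoeff hrec
    rw [leadingCoeff_mul, hPm.leadingCoeff, mul_one, hRHSm.leadingCoeff] at hlc
    exact hlc
  have hSd : S.natDegree = re + 6 := by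
    have hnd := congrArg natDegree hrec
    rw [natDegree_mul hSm.ne_zero hPm.ne_zero, hPd, hRHSd] at hnd
    omega
  have hStop : S.coeff (re+6) = 1 := by
    have := hSm.coeff_natDegree
    rwa [hSd] at this
  have hPtop : P.coeff (pe+6) = 1 := by
    have := hPm.coeff_natDegree
    rwa [hPd] at this
  have hRtop : R.coeff (qe+6) = 1 := by
    have := hRm.coeff_natDegree
    rwa [hRd] at this
  -- cast relation
  have hqQ : (qe:ℚ) = ((n:ℚ)+1)*((n:ℚ)+2)/2 - 6 := by
    have := congrArg (Nat.cast : ℕ → ℚ) hqe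
    push_cast at this
    linarith

  have hRd' : R.natDegree ≤ qe + 6 := le_of_eq hRd
  -- k = 1
  have hS5 : S.coeff (re+5) = 0 := by
    have eL := convAB S P re pe 6 6 1 (le_of_eq hSd) (le_of_eq hPd) (by norm_num) (by norm_num)
    have eX := convAB R R qe qe 6 6 1 hRd' hRd' (by norm_num) (by norm_num)
    have hc := congrArg (fun f : ℚ[X] => f.coeff (re + pe + 11)) hrec
    simp only [coeff_sub] at hc
    norm_num [Finset.sum_range_succ] at eL eX
    rw [show (re:ℕ) + pe + 11 = re + pe + (6+6-1) from by norm_num, eL] at hc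
    rw [show (re:ℕ) + pe + (6+6-1) = ((qe + qe + (6+6-1)) + 1) from by omega, coeff_X_mul, sq,
      eX, show ((4:ℚ[X]) * (R * derivative (derivative R) - (derivative R)^2)).coeff (qe + qe + (6+6-1) + 1) = 0
        from coeff_eq_zero_of_natDegree_lt (by omega)] at hc
    rw [hStop, hP5, hPtop, hR5, hRtop] at hc
    linarith
  -- k = 2
  have hS4 : S.coeff (re+4) = 0 := by
    have eL := convAB S P re pe 6 6 2 (le_of_eq hSd) (le_of_eq hPd) (by norm_num) (by norm_num)
    have eX := convAB R R qe qe 6 6 2 hRd' hRd' (by norm_num) (by norm_num)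
    have hc := congrArg (fun f : ℚ[X] => f.coeff (re + pe + 10)) hrec
    simp only [coeff_sub] at hc
    norm_num [Finset.sum_range_succ] at eL eX
    rw [show (re:ℕ) + pe + 10 = re + pe + (6+6-2) from by norm_num, eL] at hc
    rw [show (re:ℕ) + pe + (6+6-2) = ((qe + qe + 10) + 1) from by omega, coeff_X_mul, sq,
      eX, show ((4:ℚ[X]) * (R * derivative (derivative R) - (derivative R)^2)).coeff (qe + qe + 10 + 1) = 0
        from coeff_eq_zero_of_natDegree_lt (by omega)] at hc
    rw [hStop, hP4, hPtop, hR4, hR5, hRtop, hS5] at hc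
    linarith
  -- k = 3
  have hS3 : S.coeff (re+3) = A3f ((n:ℚ)+2) := by
    have eL := convAB S P re pe 6 6 3 (le_of_eq hSd) (le_of_eq hPd) (by norm_num) (by norm_num)
    have eX := convAB R R qe qe 6 6 3 hRd' hRd' (by norm_num) (by norm_num)
    have eT2 := convAB R (derivative (derivative R)) qe qe 6 4 0 hRd' hD2 (by norm_num) (by norm_num)
    have eT3 := convAB (derivative R) (derivative R) qe qe 5 5 0 hD1 hD1 (by norm_num) (by norm_num)
    have hc := congrArg (fun f : ℚ[X] => f.coeff (re + pe + 9)) hrec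
    simp only [coeff_sub] at hc
    norm_num [Finset.sum_range_succ] at eL eX eT2 eT3
    rw [show (re:ℕ) + pe + 9 = re + pe + (6+6-3) from by norm_num, eL] at hc
    rw [show (re:ℕ) + pe + (6+6-3) = ((qe + qe + 9) + 1) from by omega, coeff_X_mul, sq, eX] at hc
    rw [show (qe:ℕ) + qe + 9 + 1 = qe + qe + 10 from by omega, coeff_ofNat_mul, coeff_sub,
      eT2, pow_two (derivative R), eT3] at hc
    simp only [coeff_derivative] at hc
    rw [show (qe:ℕ) + 4 + 1 = qe + 5 from by omega, show (qe:ℕ) + 5 + 1 = qe + 6 from by omega] at hc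
    rw [hStop, hPtop, hRtop, hP3, hP4, hP5, hR3, hR4, hR5, hS5, hS4] at hc
    push_cast at hc
    simp only [A3f] at hc ⊢
    push_cast at hc ⊢
    rw [hqQ] at hc
    linear_combination hc
  -- k = 4
  have hS2 : S.coeff (re+2) = 0 := by
    have eL := convAB S P re pe 6 6 4 (le_of_eq hSd) (le_of_eq hPd) (by norm_num) (by norm_num)
    have eX := convAB R R qe qe 6 6 4 hRd' hRd' (by norm_num) (by norm_num)
    have eT2 := convAB R (derivative (derivative R)) qe qe 6 4 1 hRd' hD2 (by norm_num) (by norm_num)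
    have eT3 := convAB (derivative R) (derivative R) qe qe 5 5 1 hD1 hD1 (by norm_num) (by norm_num)
    have hc := congrArg (fun f : ℚ[X] => f.coeff (re + pe + 8)) hrec
    simp only [coeff_sub] at hc
    norm_num [Finset.sum_range_succ] at eL eX eT2 eT3
    rw [show (re:ℕ) + pe + 8 = re + pe + (6+6-4) from by norm_num, eL] at hc
    rw [show (re:ℕ) + pe + (6+6-4) = ((qe + qe + 8) + 1) from by omega, coeff_X_mul, sq, eX] at hc
    rw [show (qe:ℕ) + qe + 8 + 1 = qe + qe + 9 from by omega, coeff_ofNat_mul, coeff_sub,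
      eT2, pow_two (derivative R), eT3] at hc
    simp only [coeff_derivative] at hc
    simp only [show (qe:ℕ) + 3 + 1 = qe + 4 from by omega, show (qe:ℕ) + 4 + 1 = qe + 5 from by omega,
      show (qe:ℕ) + 5 + 1 = qe + 6 from by omega] at hc
    rw [hStop, hPtop, hRtop, hP2, hP3, hP4, hP5, hR2, hR3, hR4, hR5, hS5, hS4, hS3] at hc
    linear_combination hc
  -- k = 5
  have hS1 : S.coeff (re+1) = 0 := by
    have eL := convAB S P re pe 6 6 5 (le_of_eq hSd) (le_of_eq hPd) (by norm_num) (by norm_num)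
    have eX := convAB R R qe qe 6 6 5 hRd' hRd' (by norm_num) (by norm_num)
    have eT2 := convAB R (derivative (derivative R)) qe qe 6 4 2 hRd' hD2 (by norm_num) (by norm_num)
    have eT3 := convAB (derivative R) (derivative R) qe qe 5 5 2 hD1 hD1 (by norm_num) (by norm_num)
    have hc := congrArg (fun f : ℚ[X] => f.coeff (re + pe + 7)) hrec
    simp only [coeff_sub] at hc
    norm_num [Finset.sum_range_succ] at eL eX eT2 eT3
    rw [show (re:ℕ) + pe + 7 = re + pe + (6+6-5) from by norm_num, eL] at hc
    rw [show (re:ℕ) + pe + (6+6-5) = ((qe + qe + 7) + 1) from by omega, coeff_X_mul, sq, eX] at hc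
    rw [show (qe:ℕ) + qe + 7 + 1 = qe + qe + 8 from by omega, coeff_ofNat_mul, coeff_sub,
      eT2, pow_two (derivative R), eT3] at hc
    simp only [coeff_derivative] at hc
    simp only [show (qe:ℕ) + 2 + 1 = qe + 3 from by omega, show (qe:ℕ) + 3 + 1 = qe + 4 from by omega,
      show (qe:ℕ) + 4 + 1 = qe + 5 from by omega, show (qe:ℕ) + 5 + 1 = qe + 6 from by omega] at hc
    rw [hStop, hPtop, hRtop, hP1, hP2, hP3, hP4, hP5, hR1, hR2, hR3, hR4, hR5, hS5, hS4, hS3, hS2] at hc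
    linear_combination hc
  -- k = 6
  have hS0 : S.coeff re = A6f ((n:ℚ)+2) := by
    have eL := convAB S P re pe 6 6 6 (le_of_eq hSd) (le_of_eq hPd) (by norm_num) (by norm_num)
    have eX := convAB R R qe qe 6 6 6 hRd' hRd' (by norm_num) (by norm_num)
    have eT2 := convAB R (derivative (derivative R)) qe qe 6 4 3 hRd' hD2 (by norm_num) (by norm_num)
    have eT3 := convAB (derivative R) (derivative R) qe qe 5 5 3 hD1 hD1 (by norm_num) (by norm_num)
    have hc := congrArg (fun f : ℚ[X] => f.coeff (re + pe + 6)) hrec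
    simp only [coeff_sub] at hc
    norm_num [Finset.sum_range_succ] at eL eX eT2 eT3
    rw [show (re:ℕ) + pe + 6 = re + pe + (6+6-6) from by norm_num, eL] at hc
    rw [show (re:ℕ) + pe + (6+6-6) = ((qe + qe + 6) + 1) from by omega, coeff_X_mul, sq, eX] at hc
    rw [show (qe:ℕ) + qe + 6 + 1 = qe + qe + 7 from by omega, coeff_ofNat_mul, coeff_sub,
      eT2, pow_two (derivative R), eT3] at hc
    simp only [coeff_derivative] at hc
    simp only [show (qe:ℕ) + 1 + 1 = qe + 2 from by omega, show (qe:ℕ) + 2 + 1 = qe + 3 from by omega,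
      show (qe:ℕ) + 3 + 1 = qe + 4 from by omega,
      show (qe:ℕ) + 4 + 1 = qe + 5 from by omega, show (qe:ℕ) + 5 + 1 = qe + 6 from by omega] at hc
    rw [hStop, hPtop, hRtop, hP0, hP1, hP2, hP3, hP4, hP5, hR0, hR1, hR2, hR3, hR4, hR5,
      hS5, hS4, hS3, hS2, hS1] at hc
    push_cast at hc
    simp only [A3f, A6f] at hc ⊢
    push_cast at hc ⊢
    rw [hqQ] at hc
    linear_combination hc
  have c2 : ((n:ℚ)+2) = ((n+2 : ℕ) : ℚ) := by push_cast; ring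
  exact ⟨hSm, hSd, hS5, hS4, by rw [hS3, c2], hS2, hS1, by rw [hS0, c2]⟩

lemma twoT (m : ℕ) : 2 * ((m+3)*(m+4)/2 - 6 + 6) = (m+3)*(m+4) := by
  have h1 : 2 ∣ (m+3)*(m+4) := by
    have := Nat.even_mul_succ_self (m+3)
    exact this.two_dvd
  have h2 : 12 ≤ (m+3)*(m+4) := by nlinarith
  omega

lemma good3' : GoodAt (X^6 + 20 * X^3 - 80 : ℚ[X]) 0 3 := by
  refine ⟨?_, ?_, ?_, ?_, ?_, ?_, ?_, ?_⟩
  · monicity!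
  · compute_degree!
  all_goals simp [coeff_one, coeff_X_pow, A3f, A6f, coeff_ofNat_mul, coeff_X]
  all_goals norm_num [A3f, A6f]

lemma good4' : GoodAt (X^10 + 60 * X^7 + 11200 * X : ℚ[X]) 4 4 := by
  refine ⟨?_, ?_, ?_, ?_, ?_, ?_, ?_, ?_⟩
  · monicity!
  · compute_degree!
  all_goals simp [coeff_one, coeff_X_pow, A3f, A6f, coeff_ofNat_mul, coeff_X]
  all_goals norm_num [A3f, A6f]

/-- Explicit formula for the coefficient `A_{n,6}` of the Yablonskii–Vorob'ev
polynomial `Q n`. -/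
theorem coeffA_six
    (Q : ℕ → Polynomial ℚ)
    (hQ0 : Q 0 = 1) (hQ1 : Q 1 = X)
    (hQrec : ∀ n : ℕ, Q (n + 2) * Q n =
      X * (Q (n + 1)) ^ 2 -
        4 * (Q (n + 1) * derivative (derivative (Q (n + 1))) -
              (derivative (Q (n + 1))) ^ 2)) :
    ∀ n : ℕ,
      coeffA Q n 6 =
        (1 / 72) * (n : ℚ) * ((n : ℚ) ^ 2 - 1) * ((n : ℚ) ^ 2 - 4) * ((n : ℚ) - 4) * ((n : ℚ) + 5) * ((n : ℚ) + 3) := by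
  -- explicit small polynomials
  have h2 : Q 2 = X^3 + 4 := by
    have h := hQrec 0
    rw [hQ0, hQ1] at h
    simp only [derivative_X, derivative_one, mul_one] at h
    rw [h]; ring
  have hd2 : derivative (X^3 + 4 : ℚ[X]) = 3 * X^2 := by
    simp [derivative_X_pow, map_ofNat]
    norm_num
  have h3 : Q 3 = X^6 + 20 * X^3 - 80 := by
    have h := hQrec 1
    rw [hQ1, h2, hd2] at h
    have hd2' : derivative (3 * X^2 : ℚ[X]) = 6 * X := by
      simp [derivative_X_pow, map_ofNat]
      ring
    rw [hd2'] at h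
    apply mul_right_cancel₀ (X_ne_zero : (X:ℚ[X]) ≠ 0)
    rw [h]; ring
  have h4 : Q 4 = X^10 + 60 * X^7 + 11200 * X := by
    have h := hQrec 2
    rw [h2, h3] at h
    have hd3 : derivative (X^6 + 20 * X^3 - 80 : ℚ[X]) = 6 * X^5 + 60 * X^2 := by
      simp [derivative_X_pow, map_ofNat]
      ring
    have hd3' : derivative (6 * X^5 + 60 * X^2 : ℚ[X]) = 30 * X^4 + 120 * X := by
      simp [derivative_X_pow, map_ofNat]
      ring
    rw [hd3, hd3'] at h
    have hne : (X^3 + 4 : ℚ[X]) ≠ 0 := by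
      intro hc
      have := congrArg (eval 0) hc
      simp at this
    apply mul_right_cancel₀ hne
    rw [h]; ring
  have good3 : GoodAt (Q 3) 0 3 := by rw [h3]; exact good3'
  have good4 : GoodAt (Q 4) 4 4 := by rw [h4]; exact good4'
  have main : ∀ m : ℕ, GoodAt (Q (m+3)) ((m+3)*(m+4)/2 - 6) (m+3) ∧
      GoodAt (Q (m+4)) ((m+4)*(m+5)/2 - 6) (m+4) := by
    intro m
    induction m with
    | zero =>
      constructor
      · norm_num
        exact good3
      · norm_num
        exact good4
    | succ k ih =>
      refine ⟨ih.2, ?_⟩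
      have hst := step_s17 (Q (k+3)) (Q (k+4)) (Q (k+5)) (k+3)
        ((k+3)*(k+4)/2 - 6) ((k+4)*(k+5)/2 - 6) ((k+5)*(k+6)/2 - 6)
        (twoT k) (twoT (k+1)) (twoT (k+2)) (hQrec (k+3)) ih.1 ih.2
      exact hst
  intro n
  rcases lt_or_ge n 3 with h | h
  · interval_cases n <;> simp [coeffA] <;> norm_num
  · obtain ⟨m, rfl⟩ : ∃ m, n = m + 3 := ⟨n - 3, by omega⟩
    obtain ⟨-, -, -, -, -, -, -, h0⟩ := (main m).1
    have h12 : 12 ≤ (m+3)*(m+4) := by nlinarith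
    have h2d : 2 * ((m+3)*(m+4)/2 - 6 + 6) = (m+3)*(m+4) := twoT m
    have heq : (m+3) * ((m+3)+1) = (m+3)*(m+4) := by ring
    rw [coeffA, if_pos (by omega : 6 ≤ (m+3) * ((m+3)+1) / 2)]
    have hidx : (m+3) * ((m+3)+1) / 2 - 6 = (m+3)*(m+4)/2 - 6 := by
      omega
    rw [hidx, h0]
    simp only [A6f]
    push_cast
    ring
end

section
/- For every integer n ≥ 0, the coefficient A_{n,9} of the Yablonskii–Vorob'ev polynomial Q_n equals A_{n,9} = (1/1296) n (n² − 1)(n² − 4)(n² − 9)(n + 4)(n⁴ + 2n³ − 57n² − 58n + 1120). -/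
open Polynomial

def gA (k : ℕ) (x : ℚ) : ℚ :=
  if k = 0 then 1
  else if k = 3 then x*(x+1)*(x-1)*(x+2)/6
  else if k = 6 then x*(x-1)*(x-2)*(x-4)*(x+1)*(x+2)*(x+3)*(x+5)/72
  else if k = 9 then
    x*(x^2-1)*(x^2-4)*(x^2-9)*(x+4)*(x^4+2*x^3-57*x^2-58*x+1120)/1296
  else 0


lemma revCoeff (p : Polynomial ℚ) (k : ℕ) (h : k ≤ p.natDegree) :
    p.reverse.coeff k = p.coeff (p.natDegree - k) := by
  rw [coeff_reverse, revAt_le h]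

lemma revCoeff_gt (p : Polynomial ℚ) (k : ℕ) (h : p.natDegree < k) :
    p.reverse.coeff k = 0 :=
  coeff_eq_zero_of_natDegree_lt (lt_of_le_of_lt (reverse_natDegree_le p) h)

lemma revAt_gt (N k : ℕ) (h : N < k) : revAt N k = k := by
  rw [← revAtFun_eq]; unfold revAtFun; rw [if_neg (by omega)]

lemma reflect_derivative (p : Polynomial ℚ) (d : ℕ) (h : p.natDegree ≤ d + 1) :
    reflect d (derivative p) =
      C ((d : ℚ) + 1) * reflect (d+1) p - X * derivative (reflect (d+1) p) := by
  ext k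
  rw [coeff_reflect, coeff_sub, coeff_C_mul, coeff_reflect]
  rcases lt_trichotomy k (d+1) with hk | hk | hk
  · have hkd : k ≤ d := by omega
    rw [revAt_le hkd, revAt_le (by omega : k ≤ d + 1)]
    rcases Nat.eq_zero_or_pos k with h0 | h0
    · subst h0
      have e : d - 0 + 1 = d + 1 - 0 := by omega
      rw [coeff_derivative, e]
      simp
      push_cast
      ring
    · obtain ⟨j, rfl⟩ : ∃ j, k = j + 1 := ⟨k - 1, by omega⟩
      rw [coeff_derivative, coeff_X_mul, coeff_derivative, coeff_reflect,
        revAt_le (by omega : j + 1 ≤ d + 1)]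
      have e1 : d - (j+1) + 1 = d + 1 - (j+1) := by omega
      rw [e1]
      have e2 : ((d - (j+1) : ℕ) : ℚ) + 1 = (d:ℚ) - j := by
        push_cast [show j + 1 ≤ d from hkd]; ring
      rw [e2]
      push_cast
      ring
  · subst hk
    rw [revAt_gt d (d+1) (by omega)]
    rw [coeff_derivative, coeff_X_mul, coeff_derivative, coeff_reflect,
      revAt_le (le_refl (d+1))]
    rw [coeff_eq_zero_of_natDegree_lt (by omega : p.natDegree < d + 1 + 1)]
    ring
  · obtain ⟨j, rfl⟩ : ∃ j, k = j + 1 := ⟨k - 1, by omega⟩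
    rw [revAt_gt d (j+1) (by omega)]
    rw [coeff_derivative, coeff_X_mul, coeff_derivative, coeff_reflect,
      revAt_gt (d+1) (j+1) (by omega)]
    rw [coeff_eq_zero_of_natDegree_lt (by omega : p.natDegree < j + 1),
      coeff_eq_zero_of_natDegree_lt (by omega : p.natDegree < j + 1 + 1)]
    ring

set_option maxHeartbeats 4000000 in
lemma step_s18 (Q : ℕ → Polynomial ℚ) (n m : ℕ)
    (hrec : Q (n + 2) * Q n =
      X * (Q (n + 1)) ^ 2 -
        4 * (Q (n + 1) * derivative (derivative (Q (n + 1))) -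
              (derivative (Q (n + 1))) ^ 2))
    (hdp : (Q (n+1)).natDegree = m + 2)
    (h0m : (Q n).Monic) (h1m : (Q (n+1)).Monic)
    (hd0 : 2 * (Q n).natDegree = n * (n+1))
    (hd1 : 2 * (m + 2) = (n+1) * (n+2))
    (hc0 : ∀ k ≤ 9, (Q n).reverse.coeff k = gA k (n : ℚ))
    (hc1 : ∀ k ≤ 9, (Q (n+1)).reverse.coeff k = gA k ((n : ℚ) + 1)) :
    (Q (n+2)).Monic ∧ 2 * (Q (n+2)).natDegree = (n+2) * (n+3) ∧
      ∀ k ≤ 9, (Q (n+2)).reverse.coeff k = gA k ((n : ℚ) + 2) := by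
  set p := Q (n+1) with hpdef
  set s : Polynomial ℚ := p * derivative (derivative p) - (derivative p)^2 with hsdef
  have hp' : (derivative p).natDegree ≤ m + 1 := by
    have := natDegree_derivative_le p; omega
  have hp'' : (derivative (derivative p)).natDegree ≤ m := by
    have := natDegree_derivative_le (derivative p); omega
  have hs : s.natDegree ≤ 2*m + 2 := by
    apply le_trans (natDegree_sub_le _ _)
    apply max_le
    · exact le_trans (natDegree_mul_le) (by omega)
    · exact le_trans (natDegree_pow_le) (by omega)
  have hC4 : (4 : Polynomial ℚ) = C (4 : ℚ) := (map_ofNat C 4).symm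
  set R : Polynomial ℚ := X * p^2 - 4 * s with hRdef
  have hXp2 : (X * p^2).Monic := monic_X.mul (h1m.pow 2)
  have hdXp2 : (X * p^2).natDegree = 2*m + 5 := by
    rw [natDegree_mul (X_ne_zero) (pow_ne_zero 2 h1m.ne_zero), natDegree_X,
      natDegree_pow, hdp]; ring
  have hRcoeff : R.coeff (2*m+5) = 1 := by
    rw [hRdef, coeff_sub, hC4, coeff_C_mul,
      coeff_eq_zero_of_natDegree_lt (by omega : s.natDegree < 2*m+5)]
    have := hXp2.coeff_natDegree
    rw [hdXp2] at this
    rw [this]; ring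
  have hRdeg_le : R.natDegree ≤ 2*m + 5 := by
    rw [hRdef]
    apply le_trans (natDegree_sub_le _ _)
    apply max_le (le_of_eq hdXp2)
    exact le_trans natDegree_mul_le (by simp; omega)
  have hRmonic : R.Monic := monic_of_natDegree_le_of_coeff_eq_one _ hRdeg_le hRcoeff
  have hdR : R.natDegree = 2*m + 5 :=
    le_antisymm hRdeg_le (le_natDegree_of_ne_zero (by rw [hRcoeff]; norm_num))
  have hrec' : Q (n+2) * Q n = R := hrec
  have h2ne : Q (n+2) ≠ 0 := by
    intro h; apply hRmonic.ne_zero; rw [← hrec', h, zero_mul]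
  have h2monic : (Q (n+2)).Monic := by
    have hl : (Q (n+2)).leadingCoeff * (Q n).leadingCoeff = 1 := by
      rw [← leadingCoeff_mul, hrec']; exact hRmonic
    rwa [h0m.leadingCoeff, mul_one] at hl
  have hdeg2 : (Q (n+2)).natDegree + (Q n).natDegree = 2*m + 5 := by
    rw [← natDegree_mul h2ne h0m.ne_zero, hrec', hdR]
  refine ⟨h2monic, ?_, ?_⟩
  · have key : (n+2) * (n+3) + n * (n+1) = 2 * (2*m+5) := by
      ring_nf
      ring_nf at hd1
      omega
    omega
  -- part 2: the reversed equation
  have hrev2 : (Q (n+2) * Q n).reverse = (Q (n+2)).reverse * (Q n).reverse :=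
    reverse_mul (by rw [h2monic.leadingCoeff, h0m.leadingCoeff]; norm_num)
  set r1 : Polynomial ℚ := p.reverse with hr1def
  have hrefl_p : reflect (m+2) p = r1 := by
    rw [hr1def, Polynomial.reverse, hdp]
  set t1 : Polynomial ℚ := C ((m:ℚ)+2) * r1 - X * derivative r1 with ht1def
  have ht1 : reflect (m+1) (derivative p) = t1 := by
    rw [reflect_derivative p (m+1) (by omega)]
    have h1 : ((m+1:ℕ):ℚ) + 1 = (m:ℚ) + 2 := by push_cast; ring
    have h2 : m + 1 + 1 = m + 2 := rfl
    rw [h1, h2, hrefl_p]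
  set t2 : Polynomial ℚ := C ((m:ℚ)+1) * t1 - X * derivative t1 with ht2def
  have ht2 : reflect m (derivative (derivative p)) = t2 := by
    rw [reflect_derivative (derivative p) m (by omega), ht1]
  set w : Polynomial ℚ := r1 * t2 - t1^2 with hwdef
  have hrefl_s : reflect (2*m+2) s = w := by
    rw [hsdef, reflect_sub]
    have i1 : 2*m+2 = (m+2) + m := by ring
    have e1 := reflect_mul p (derivative (derivative p)) (le_of_eq hdp) hp''
    have i2 : 2*m+2 = (m+1) + (m+1) := by ring
    have e2 := reflect_mul (derivative p) (derivative p) hp' hp'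
    rw [pow_two, i2, e2, ht1, ← pow_two]
    rw [i2.symm.trans i1, e1, hrefl_p, ht2, hwdef]
  have hreflR : reflect (2*m+5) R = r1^2 - C 4 * (X^3 * w) := by
    rw [hRdef, hC4, reflect_sub, reflect_C_mul]
    congr 1
    · have i1 : 2*m+5 = 1 + (2*m+4) := by ring
      rw [i1, reflect_mul X (p^2) natDegree_X_le
        (by rw [natDegree_pow, hdp]; omega)]
      have i2 : 2*m+4 = (m+2) + (m+2) := by ring
      rw [pow_two, i2, reflect_mul p p (le_of_eq hdp) (le_of_eq hdp), hrefl_p,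
        ← pow_two]
      rw [← pow_one (X : Polynomial ℚ), reflect_monomial, revAt_le (le_refl 1)]
      norm_num
    · congr 1
      have i1 : 2*m+5 = 3 + (2*m+2) := by ring
      rw [i1, ← one_mul s, reflect_mul 1 s (by simp) hs, hrefl_s]
      rw [← pow_zero (X : Polynomial ℚ), reflect_monomial, revAt_le (by omega)]
  have E : (Q (n+2)).reverse * (Q n).reverse = r1^2 - C 4 * (X^3 * w) := by
    rw [← hrev2, hrec', Polynomial.reverse, hdR, hreflR]
  -- generic gA facts
  have g0 : ∀ x : ℚ, gA 0 x = 1 := fun x => by norm_num [gA]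
  have g1 : ∀ x : ℚ, gA 1 x = 0 := fun x => by norm_num [gA]
  have g2 : ∀ x : ℚ, gA 2 x = 0 := fun x => by norm_num [gA]
  have g4 : ∀ x : ℚ, gA 4 x = 0 := fun x => by norm_num [gA]
  have g5 : ∀ x : ℚ, gA 5 x = 0 := fun x => by norm_num [gA]
  have g7 : ∀ x : ℚ, gA 7 x = 0 := fun x => by norm_num [gA]
  have g8 : ∀ x : ℚ, gA 8 x = 0 := fun x => by norm_num [gA]
  have b0 : (Q n).reverse.coeff 0 = gA 0 (n : ℚ) := hc0 0 (by norm_num)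
  have b1 : (Q n).reverse.coeff 1 = gA 1 (n : ℚ) := hc0 1 (by norm_num)
  have b2 : (Q n).reverse.coeff 2 = gA 2 (n : ℚ) := hc0 2 (by norm_num)
  have b3 : (Q n).reverse.coeff 3 = gA 3 (n : ℚ) := hc0 3 (by norm_num)
  have b4 : (Q n).reverse.coeff 4 = gA 4 (n : ℚ) := hc0 4 (by norm_num)
  have b5 : (Q n).reverse.coeff 5 = gA 5 (n : ℚ) := hc0 5 (by norm_num)
  have b6 : (Q n).reverse.coeff 6 = gA 6 (n : ℚ) := hc0 6 (by norm_num)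
  have b7 : (Q n).reverse.coeff 7 = gA 7 (n : ℚ) := hc0 7 (by norm_num)
  have b8 : (Q n).reverse.coeff 8 = gA 8 (n : ℚ) := hc0 8 (by norm_num)
  have b9 : (Q n).reverse.coeff 9 = gA 9 (n : ℚ) := hc0 9 (by norm_num)
  have a0 : r1.coeff 0 = gA 0 ((n : ℚ) + 1) := hc1 0 (by norm_num)
  have a1 : r1.coeff 1 = gA 1 ((n : ℚ) + 1) := hc1 1 (by norm_num)
  have a2 : r1.coeff 2 = gA 2 ((n : ℚ) + 1) := hc1 2 (by norm_num)
  have a3 : r1.coeff 3 = gA 3 ((n : ℚ) + 1) := hc1 3 (by norm_num)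
  have a4 : r1.coeff 4 = gA 4 ((n : ℚ) + 1) := hc1 4 (by norm_num)
  have a5 : r1.coeff 5 = gA 5 ((n : ℚ) + 1) := hc1 5 (by norm_num)
  have a6 : r1.coeff 6 = gA 6 ((n : ℚ) + 1) := hc1 6 (by norm_num)
  have a7 : r1.coeff 7 = gA 7 ((n : ℚ) + 1) := hc1 7 (by norm_num)
  have a8 : r1.coeff 8 = gA 8 ((n : ℚ) + 1) := hc1 8 (by norm_num)
  have a9 : r1.coeff 9 = gA 9 ((n : ℚ) + 1) := hc1 9 (by norm_num)
  have u0 : t1.coeff 0 = ((m:ℚ)+2-0) * gA 0 ((n:ℚ)+1) := by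
    simp [ht1def, coeff_sub, coeff_C_mul, coeff_mul, coeff_X, coeff_one, coeff_derivative, Finset.Nat.sum_antidiagonal_eq_sum_range_succ_mk, Finset.sum_range_succ, Finset.sum_range_zero, a0, a1, a2, a3, a4, a5, a6, a7, g1, g2, g4, g5, g7, g0]
    try ring
  have u1 : t1.coeff 1 = ((m:ℚ)+2-1) * gA 1 ((n:ℚ)+1) := by
    simp [ht1def, coeff_sub, coeff_C_mul, coeff_mul, coeff_X, coeff_one, coeff_derivative, Finset.Nat.sum_antidiagonal_eq_sum_range_succ_mk, Finset.sum_range_succ, Finset.sum_range_zero, a0, a1, a2, a3, a4, a5, a6, a7, g1, g2, g4, g5, g7, g0]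
    try ring
  have u2 : t1.coeff 2 = ((m:ℚ)+2-2) * gA 2 ((n:ℚ)+1) := by
    simp [ht1def, coeff_sub, coeff_C_mul, coeff_mul, coeff_X, coeff_one, coeff_derivative, Finset.Nat.sum_antidiagonal_eq_sum_range_succ_mk, Finset.sum_range_succ, Finset.sum_range_zero, a0, a1, a2, a3, a4, a5, a6, a7, g1, g2, g4, g5, g7, g0]
    try ring
  have u3 : t1.coeff 3 = ((m:ℚ)+2-3) * gA 3 ((n:ℚ)+1) := by
    simp [ht1def, coeff_sub, coeff_C_mul, coeff_mul, coeff_X, coeff_one, coeff_derivative, Finset.Nat.sum_antidiagonal_eq_sum_range_succ_mk, Finset.sum_range_succ, Finset.sum_range_zero, a0, a1, a2, a3, a4, a5, a6, a7, g1, g2, g4, g5, g7, g0]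
    try ring
  have u4 : t1.coeff 4 = ((m:ℚ)+2-4) * gA 4 ((n:ℚ)+1) := by
    simp [ht1def, coeff_sub, coeff_C_mul, coeff_mul, coeff_X, coeff_one, coeff_derivative, Finset.Nat.sum_antidiagonal_eq_sum_range_succ_mk, Finset.sum_range_succ, Finset.sum_range_zero, a0, a1, a2, a3, a4, a5, a6, a7, g1, g2, g4, g5, g7, g0]
    try ring
  have u5 : t1.coeff 5 = ((m:ℚ)+2-5) * gA 5 ((n:ℚ)+1) := by
    simp [ht1def, coeff_sub, coeff_C_mul, coeff_mul, coeff_X, coeff_one, coeff_derivative, Finset.Nat.sum_antidiagonal_eq_sum_range_succ_mk, Finset.sum_range_succ, Finset.sum_range_zero, a0, a1, a2, a3, a4, a5, a6, a7, g1, g2, g4, g5, g7, g0]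
    try ring
  have u6 : t1.coeff 6 = ((m:ℚ)+2-6) * gA 6 ((n:ℚ)+1) := by
    simp [ht1def, coeff_sub, coeff_C_mul, coeff_mul, coeff_X, coeff_one, coeff_derivative, Finset.Nat.sum_antidiagonal_eq_sum_range_succ_mk, Finset.sum_range_succ, Finset.sum_range_zero, a0, a1, a2, a3, a4, a5, a6, a7, g1, g2, g4, g5, g7, g0]
    try ring
  have v0 : t2.coeff 0 = ((m:ℚ)+1-0) * (((m:ℚ)+2-0) * gA 0 ((n:ℚ)+1)) := by
    simp [ht2def, coeff_sub, coeff_C_mul, coeff_mul, coeff_X, coeff_one, coeff_derivative, Finset.Nat.sum_antidiagonal_eq_sum_range_succ_mk, Finset.sum_range_succ, Finset.sum_range_zero, u0, u1, u2, u3, u4, u5, u6, g1, g2, g4, g5, g7, g0]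
    try ring
  have v1 : t2.coeff 1 = ((m:ℚ)+1-1) * (((m:ℚ)+2-1) * gA 1 ((n:ℚ)+1)) := by
    simp [ht2def, coeff_sub, coeff_C_mul, coeff_mul, coeff_X, coeff_one, coeff_derivative, Finset.Nat.sum_antidiagonal_eq_sum_range_succ_mk, Finset.sum_range_succ, Finset.sum_range_zero, u0, u1, u2, u3, u4, u5, u6, g1, g2, g4, g5, g7, g0]
    try ring
  have v2 : t2.coeff 2 = ((m:ℚ)+1-2) * (((m:ℚ)+2-2) * gA 2 ((n:ℚ)+1)) := by
    simp [ht2def, coeff_sub, coeff_C_mul, coeff_mul, coeff_X, coeff_one, coeff_derivative, Finset.Nat.sum_antidiagonal_eq_sum_range_succ_mk, Finset.sum_range_succ, Finset.sum_range_zero, u0, u1, u2, u3, u4, u5, u6, g1, g2, g4, g5, g7, g0]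
    try ring
  have v3 : t2.coeff 3 = ((m:ℚ)+1-3) * (((m:ℚ)+2-3) * gA 3 ((n:ℚ)+1)) := by
    simp [ht2def, coeff_sub, coeff_C_mul, coeff_mul, coeff_X, coeff_one, coeff_derivative, Finset.Nat.sum_antidiagonal_eq_sum_range_succ_mk, Finset.sum_range_succ, Finset.sum_range_zero, u0, u1, u2, u3, u4, u5, u6, g1, g2, g4, g5, g7, g0]
    try ring
  have v4 : t2.coeff 4 = ((m:ℚ)+1-4) * (((m:ℚ)+2-4) * gA 4 ((n:ℚ)+1)) := by
    simp [ht2def, coeff_sub, coeff_C_mul, coeff_mul, coeff_X, coeff_one, coeff_derivative, Finset.Nat.sum_antidiagonal_eq_sum_range_succ_mk, Finset.sum_range_succ, Finset.sum_range_zero, u0, u1, u2, u3, u4, u5, u6, g1, g2, g4, g5, g7, g0]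
    try ring
  have v5 : t2.coeff 5 = ((m:ℚ)+1-5) * (((m:ℚ)+2-5) * gA 5 ((n:ℚ)+1)) := by
    simp [ht2def, coeff_sub, coeff_C_mul, coeff_mul, coeff_X, coeff_one, coeff_derivative, Finset.Nat.sum_antidiagonal_eq_sum_range_succ_mk, Finset.sum_range_succ, Finset.sum_range_zero, u0, u1, u2, u3, u4, u5, u6, g1, g2, g4, g5, g7, g0]
    try ring
  have v6 : t2.coeff 6 = ((m:ℚ)+1-6) * (((m:ℚ)+2-6) * gA 6 ((n:ℚ)+1)) := by
    simp [ht2def, coeff_sub, coeff_C_mul, coeff_mul, coeff_X, coeff_one, coeff_derivative, Finset.Nat.sum_antidiagonal_eq_sum_range_succ_mk, Finset.sum_range_succ, Finset.sum_range_zero, u0, u1, u2, u3, u4, u5, u6, g1, g2, g4, g5, g7, g0]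
    try ring
  have hw0 : w.coeff 0 = -((m:ℚ)+2) := by
    simp [hwdef, pow_two, coeff_sub, coeff_mul, Finset.Nat.sum_antidiagonal_eq_sum_range_succ_mk, Finset.sum_range_succ, Finset.sum_range_zero, a0, a1, a2, a3, a4, a5, a6, u0, u1, u2, u3, u4, u5, u6, v0, v1, v2, v3, v4, v5, v6, g0, g1, g2, g4, g5, g7]
    try ring
  have hw1 : w.coeff 1 = 0 := by
    simp [hwdef, pow_two, coeff_sub, coeff_mul, Finset.Nat.sum_antidiagonal_eq_sum_range_succ_mk, Finset.sum_range_succ, Finset.sum_range_zero, a0, a1, a2, a3, a4, a5, a6, u0, u1, u2, u3, u4, u5, u6, v0, v1, v2, v3, v4, v5, v6, g0, g1, g2, g4, g5, g7]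
    try ring
  have hw2 : w.coeff 2 = 0 := by
    simp [hwdef, pow_two, coeff_sub, coeff_mul, Finset.Nat.sum_antidiagonal_eq_sum_range_succ_mk, Finset.sum_range_succ, Finset.sum_range_zero, a0, a1, a2, a3, a4, a5, a6, u0, u1, u2, u3, u4, u5, u6, v0, v1, v2, v3, v4, v5, v6, g0, g1, g2, g4, g5, g7]
    try ring
  have hw3 : w.coeff 3 = (8-2*(m:ℚ)) * gA 3 ((n:ℚ)+1) := by
    simp [hwdef, pow_two, coeff_sub, coeff_mul, Finset.Nat.sum_antidiagonal_eq_sum_range_succ_mk, Finset.sum_range_succ, Finset.sum_range_zero, a0, a1, a2, a3, a4, a5, a6, u0, u1, u2, u3, u4, u5, u6, v0, v1, v2, v3, v4, v5, v6, g0, g1, g2, g4, g5, g7]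
    try ring
  have hw4 : w.coeff 4 = 0 := by
    simp [hwdef, pow_two, coeff_sub, coeff_mul, Finset.Nat.sum_antidiagonal_eq_sum_range_succ_mk, Finset.sum_range_succ, Finset.sum_range_zero, a0, a1, a2, a3, a4, a5, a6, u0, u1, u2, u3, u4, u5, u6, v0, v1, v2, v3, v4, v5, v6, g0, g1, g2, g4, g5, g7]
    try ring
  have hw5 : w.coeff 5 = 0 := by
    simp [hwdef, pow_two, coeff_sub, coeff_mul, Finset.Nat.sum_antidiagonal_eq_sum_range_succ_mk, Finset.sum_range_succ, Finset.sum_range_zero, a0, a1, a2, a3, a4, a5, a6, u0, u1, u2, u3, u4, u5, u6, v0, v1, v2, v3, v4, v5, v6, g0, g1, g2, g4, g5, g7]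
    try ring
  have hw6 : w.coeff 6 = (38-2*(m:ℚ)) * gA 6 ((n:ℚ)+1) + (1-(m:ℚ)) * gA 3 ((n:ℚ)+1)^2 := by
    simp [hwdef, pow_two, coeff_sub, coeff_mul, Finset.Nat.sum_antidiagonal_eq_sum_range_succ_mk, Finset.sum_range_succ, Finset.sum_range_zero, a0, a1, a2, a3, a4, a5, a6, u0, u1, u2, u3, u4, u5, u6, v0, v1, v2, v3, v4, v5, v6, g0, g1, g2, g4, g5, g7]
    try ring
  have hm' : (m : ℚ) = ((n:ℚ)^2 + 3*(n:ℚ) - 2)/2 := by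
    have := congrArg (Nat.cast : ℕ → ℚ) hd1
    push_cast at this
    linarith
  have e0 : ((Q (n+2)).reverse * (Q n).reverse).coeff 0
      = (r1^2 - C 4 * (X^3 * w)).coeff 0 := by rw [E]
  simp [pow_two, coeff_sub, coeff_C_mul, coeff_mul, coeff_X_pow, coeff_one, Finset.Nat.sum_antidiagonal_eq_sum_range_succ_mk, Finset.sum_range_succ, Finset.sum_range_zero, a0, a1, a2, a3, a4, a5, a6, a7, a8, a9, b0, b1, b2, b3, b4, b5, b6, b7, b8, b9, hw0, hw1, hw2, hw3, hw4, hw5, hw6, g0, g1, g2, g4, g5, g7, g8] at e0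
  try rw [hm'] at e0
  have c0 : (Q (n+2)).reverse.coeff 0 = gA 0 ((n:ℚ)+2) := by
    norm_num [gA] at e0 ⊢
    try rw [hm'] at e0
    linear_combination e0
  have e1 : ((Q (n+2)).reverse * (Q n).reverse).coeff 1
      = (r1^2 - C 4 * (X^3 * w)).coeff 1 := by rw [E]
  simp [pow_two, coeff_sub, coeff_C_mul, coeff_mul, coeff_X_pow, coeff_one, Finset.Nat.sum_antidiagonal_eq_sum_range_succ_mk, Finset.sum_range_succ, Finset.sum_range_zero, a0, a1, a2, a3, a4, a5, a6, a7, a8, a9, b0, b1, b2, b3, b4, b5, b6, b7, b8, b9, hw0, hw1, hw2, hw3, hw4, hw5, hw6, g0, g1, g2, g4, g5, g7, g8, c0] at e1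
  try rw [hm'] at e1
  have c1 : (Q (n+2)).reverse.coeff 1 = gA 1 ((n:ℚ)+2) := by
    norm_num [gA] at e1 ⊢
    try rw [hm'] at e1
    linear_combination e1
  have e2 : ((Q (n+2)).reverse * (Q n).reverse).coeff 2
      = (r1^2 - C 4 * (X^3 * w)).coeff 2 := by rw [E]
  simp [pow_two, coeff_sub, coeff_C_mul, coeff_mul, coeff_X_pow, coeff_one, Finset.Nat.sum_antidiagonal_eq_sum_range_succ_mk, Finset.sum_range_succ, Finset.sum_range_zero, a0, a1, a2, a3, a4, a5, a6, a7, a8, a9, b0, b1, b2, b3, b4, b5, b6, b7, b8, b9, hw0, hw1, hw2, hw3, hw4, hw5, hw6, g0, g1, g2, g4, g5, g7, g8, c0, c1] at e2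
  try rw [hm'] at e2
  have c2 : (Q (n+2)).reverse.coeff 2 = gA 2 ((n:ℚ)+2) := by
    norm_num [gA] at e2 ⊢
    try rw [hm'] at e2
    linear_combination e2
  have e3 : ((Q (n+2)).reverse * (Q n).reverse).coeff 3
      = (r1^2 - C 4 * (X^3 * w)).coeff 3 := by rw [E]
  simp [pow_two, coeff_sub, coeff_C_mul, coeff_mul, coeff_X_pow, coeff_one, Finset.Nat.sum_antidiagonal_eq_sum_range_succ_mk, Finset.sum_range_succ, Finset.sum_range_zero, a0, a1, a2, a3, a4, a5, a6, a7, a8, a9, b0, b1, b2, b3, b4, b5, b6, b7, b8, b9, hw0, hw1, hw2, hw3, hw4, hw5, hw6, g0, g1, g2, g4, g5, g7, g8, c0, c1, c2] at e3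
  try rw [hm'] at e3
  have c3 : (Q (n+2)).reverse.coeff 3 = gA 3 ((n:ℚ)+2) := by
    norm_num [gA] at e3 ⊢
    try rw [hm'] at e3
    linear_combination e3
  have e4 : ((Q (n+2)).reverse * (Q n).reverse).coeff 4
      = (r1^2 - C 4 * (X^3 * w)).coeff 4 := by rw [E]
  simp [pow_two, coeff_sub, coeff_C_mul, coeff_mul, coeff_X_pow, coeff_one, Finset.Nat.sum_antidiagonal_eq_sum_range_succ_mk, Finset.sum_range_succ, Finset.sum_range_zero, a0, a1, a2, a3, a4, a5, a6, a7, a8, a9, b0, b1, b2, b3, b4, b5, b6, b7, b8, b9, hw0, hw1, hw2, hw3, hw4, hw5, hw6, g0, g1, g2, g4, g5, g7, g8, c0, c1, c2, c3] at e4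
  try rw [hm'] at e4
  have c4 : (Q (n+2)).reverse.coeff 4 = gA 4 ((n:ℚ)+2) := by
    norm_num [gA] at e4 ⊢
    try rw [hm'] at e4
    linear_combination e4
  have e5 : ((Q (n+2)).reverse * (Q n).reverse).coeff 5
      = (r1^2 - C 4 * (X^3 * w)).coeff 5 := by rw [E]
  simp [pow_two, coeff_sub, coeff_C_mul, coeff_mul, coeff_X_pow, coeff_one, Finset.Nat.sum_antidiagonal_eq_sum_range_succ_mk, Finset.sum_range_succ, Finset.sum_range_zero, a0, a1, a2, a3, a4, a5, a6, a7, a8, a9, b0, b1, b2, b3, b4, b5, b6, b7, b8, b9, hw0, hw1, hw2, hw3, hw4, hw5, hw6, g0, g1, g2, g4, g5, g7, g8, c0, c1, c2, c3, c4] at e5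
  try rw [hm'] at e5
  have c5 : (Q (n+2)).reverse.coeff 5 = gA 5 ((n:ℚ)+2) := by
    norm_num [gA] at e5 ⊢
    try rw [hm'] at e5
    linear_combination e5
  have e6 : ((Q (n+2)).reverse * (Q n).reverse).coeff 6
      = (r1^2 - C 4 * (X^3 * w)).coeff 6 := by rw [E]
  simp [pow_two, coeff_sub, coeff_C_mul, coeff_mul, coeff_X_pow, coeff_one, Finset.Nat.sum_antidiagonal_eq_sum_range_succ_mk, Finset.sum_range_succ, Finset.sum_range_zero, a0, a1, a2, a3, a4, a5, a6, a7, a8, a9, b0, b1, b2, b3, b4, b5, b6, b7, b8, b9, hw0, hw1, hw2, hw3, hw4, hw5, hw6, g0, g1, g2, g4, g5, g7, g8, c0, c1, c2, c3, c4, c5] at e6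
  try rw [hm'] at e6
  have c6 : (Q (n+2)).reverse.coeff 6 = gA 6 ((n:ℚ)+2) := by
    norm_num [gA] at e6 ⊢
    try rw [hm'] at e6
    linear_combination e6
  have e7 : ((Q (n+2)).reverse * (Q n).reverse).coeff 7
      = (r1^2 - C 4 * (X^3 * w)).coeff 7 := by rw [E]
  simp [pow_two, coeff_sub, coeff_C_mul, coeff_mul, coeff_X_pow, coeff_one, Finset.Nat.sum_antidiagonal_eq_sum_range_succ_mk, Finset.sum_range_succ, Finset.sum_range_zero, a0, a1, a2, a3, a4, a5, a6, a7, a8, a9, b0, b1, b2, b3, b4, b5, b6, b7, b8, b9, hw0, hw1, hw2, hw3, hw4, hw5, hw6, g0, g1, g2, g4, g5, g7, g8, c0, c1, c2, c3, c4, c5, c6] at e7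
  try rw [hm'] at e7
  have c7 : (Q (n+2)).reverse.coeff 7 = gA 7 ((n:ℚ)+2) := by
    norm_num [gA] at e7 ⊢
    try rw [hm'] at e7
    linear_combination e7
  have e8 : ((Q (n+2)).reverse * (Q n).reverse).coeff 8
      = (r1^2 - C 4 * (X^3 * w)).coeff 8 := by rw [E]
  simp [pow_two, coeff_sub, coeff_C_mul, coeff_mul, coeff_X_pow, coeff_one, Finset.Nat.sum_antidiagonal_eq_sum_range_succ_mk, Finset.sum_range_succ, Finset.sum_range_zero, a0, a1, a2, a3, a4, a5, a6, a7, a8, a9, b0, b1, b2, b3, b4, b5, b6, b7, b8, b9, hw0, hw1, hw2, hw3, hw4, hw5, hw6, g0, g1, g2, g4, g5, g7, g8, c0, c1, c2, c3, c4, c5, c6, c7] at e8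
  try rw [hm'] at e8
  have c8 : (Q (n+2)).reverse.coeff 8 = gA 8 ((n:ℚ)+2) := by
    norm_num [gA] at e8 ⊢
    try rw [hm'] at e8
    linear_combination e8
  have e9 : ((Q (n+2)).reverse * (Q n).reverse).coeff 9
      = (r1^2 - C 4 * (X^3 * w)).coeff 9 := by rw [E]
  simp [pow_two, coeff_sub, coeff_C_mul, coeff_mul, coeff_X_pow, coeff_one, Finset.Nat.sum_antidiagonal_eq_sum_range_succ_mk, Finset.sum_range_succ, Finset.sum_range_zero, a0, a1, a2, a3, a4, a5, a6, a7, a8, a9, b0, b1, b2, b3, b4, b5, b6, b7, b8, b9, hw0, hw1, hw2, hw3, hw4, hw5, hw6, g0, g1, g2, g4, g5, g7, g8, c0, c1, c2, c3, c4, c5, c6, c7, c8] at e9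
  try rw [hm'] at e9
  have c9 : (Q (n+2)).reverse.coeff 9 = gA 9 ((n:ℚ)+2) := by
    norm_num [gA] at e9 ⊢
    try rw [hm'] at e9
    linear_combination e9
  intro k hk
  interval_cases k <;> first
    | exact c0 | exact c1 | exact c2 | exact c3 | exact c4
    | exact c5 | exact c6 | exact c7 | exact c8 | exact c9

lemma main (Q : ℕ → Polynomial ℚ)
    (hQ0 : Q 0 = 1) (hQ1 : Q 1 = X)
    (hQrec : ∀ n : ℕ, Q (n + 2) * Q n =
      X * (Q (n + 1)) ^ 2 -
        4 * (Q (n + 1) * derivative (derivative (Q (n + 1))) -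
              (derivative (Q (n + 1))) ^ 2)) :
    ∀ n : ℕ, (Q n).Monic ∧ 2 * (Q n).natDegree = n * (n+1) ∧
      ∀ k ≤ 9, (Q n).reverse.coeff k = gA k (n : ℚ) := by
  set P : ℕ → Prop := fun n => (Q n).Monic ∧ 2 * (Q n).natDegree = n * (n+1) ∧
      ∀ k ≤ 9, (Q n).reverse.coeff k = gA k (n : ℚ) with hP
  have hP0 : P 0 := by
    refine ⟨by rw [hQ0]; exact monic_one, by rw [hQ0]; simp, ?_⟩
    intro k hk
    rw [hQ0]
    have hrev : (1 : Polynomial ℚ).reverse = 1 := by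
      have : (1 : Polynomial ℚ) = C 1 := by norm_num
      rw [this, Polynomial.reverse, natDegree_C, reflect_C]
      norm_num
    rw [hrev]
    interval_cases k <;> norm_num [gA, coeff_one]
  have hP1 : P 1 := by
    refine ⟨by rw [hQ1]; exact monic_X, by rw [hQ1]; simp, ?_⟩
    intro k hk
    rw [hQ1]
    have hd : (X : Polynomial ℚ).natDegree = 1 := natDegree_X
    interval_cases k
    · rw [revCoeff _ 0 (by omega), hd]; norm_num [gA]
    · rw [revCoeff _ 1 (by omega), hd]; norm_num [gA]
    all_goals rw [revCoeff_gt _ _ (by omega)]; norm_num [gA]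
  have hQ2 : Q 2 = X^3 + C 4 := by
    have h := hQrec 0
    rw [hQ0, hQ1] at h
    simp at h
    rw [h, map_ofNat]
    ring
  have hP2 : P 2 := by
    have hd : (Q 2).natDegree = 3 := by
      rw [hQ2]; exact natDegree_X_pow_add_C
    refine ⟨by rw [hQ2]; exact monic_X_pow_add (by
        simpa using (degree_C_le).trans (by norm_num)), by rw [hd], ?_⟩
    intro k hk
    interval_cases k
    · rw [revCoeff _ 0 (by omega), hd, hQ2]; norm_num [gA, coeff_X_pow, coeff_C]
    · rw [revCoeff _ 1 (by omega), hd, hQ2]; norm_num [gA, coeff_X_pow, coeff_C]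
    · rw [revCoeff _ 2 (by omega), hd, hQ2]; norm_num [gA, coeff_X_pow, coeff_C]
    · rw [revCoeff _ 3 (by omega), hd, hQ2]; norm_num [gA, coeff_X_pow, coeff_C]
    all_goals rw [revCoeff_gt _ _ (by omega)]; norm_num [gA]
  have key : ∀ j : ℕ, P (j+1) ∧ P (j+2) := by
    intro j
    induction j with
    | zero => exact ⟨hP1, hP2⟩
    | succ j ih =>
      refine ⟨ih.2, ?_⟩
      obtain ⟨h1m, hd1, hc1⟩ := ih.2
      obtain ⟨h0m, hd0, hc0⟩ := ih.1
      have hge : 3 ≤ (Q (j+2)).natDegree := by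
        have h6 : 2 * 3 ≤ (j+2) * (j+2+1) := Nat.mul_le_mul (by omega) (by omega)
        omega
      obtain ⟨m, hm⟩ : ∃ m, (Q (j+2)).natDegree = m + 2 := ⟨(Q (j+2)).natDegree - 2, by omega⟩
      have hcast1 : ((j+2 : ℕ) : ℚ) = ((j+1 : ℕ) : ℚ) + 1 := by push_cast; ring
      have hcast2 : ((j+1+2 : ℕ) : ℚ) = ((j+1 : ℕ) : ℚ) + 2 := by push_cast; ring
      have hres := step_s18 Q (j+1) m (hQrec (j+1)) (by rw [← hm]) h0m h1m hd0
        (by rw [← hm]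
            have he : (j+1+1) * (j+1+2) = (j+2) * (j+2+1) := by ring
            rw [he]
            exact hd1)
        hc0
        (by intro k hk
            rw [hc1 k hk, ← hcast1])
      refine ⟨hres.1, ?_, ?_⟩
      · have h2 := hres.2.1
        have he : (j+1+2) * (j+1+3) = (j+1+2) * (j+1+2+1) := by ring
        rw [he] at h2
        exact h2
      · intro k hk
        rw [hres.2.2 k hk, ← hcast2]
  intro n
  match n with
  | 0 => exact hP0
  | (j+1) => exact (key j).1


/-- Explicit formula for the coefficient `A_{n,9}` of the Yablonskii–Vorob'ev
polynomial `Q n`. -/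
theorem coeffA_nine
    (Q : ℕ → Polynomial ℚ)
    (hQ0 : Q 0 = 1) (hQ1 : Q 1 = X)
    (hQrec : ∀ n : ℕ, Q (n + 2) * Q n =
      X * (Q (n + 1)) ^ 2 -
        4 * (Q (n + 1) * derivative (derivative (Q (n + 1))) -
              (derivative (Q (n + 1))) ^ 2)) :
    ∀ n : ℕ,
      coeffA Q n 9 =
        (1 / 1296) * (n : ℚ) * ((n : ℚ) ^ 2 - 1) * ((n : ℚ) ^ 2 - 4) * ((n : ℚ) ^ 2 - 9) * ((n : ℚ) + 4) * ((n : ℚ) ^ 4 + 2 * (n : ℚ) ^ 3 - 57 * (n : ℚ) ^ 2 - 58 * (n : ℚ) + 1120) := by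
  intro n
  obtain ⟨hmon, hdeg, hco⟩ := main Q hQ0 hQ1 hQrec n
  unfold coeffA
  by_cases h9 : 9 ≤ n * (n + 1) / 2
  · rw [if_pos h9]
    have hT : n * (n + 1) / 2 = (Q n).natDegree := by omega
    rw [hT, ← revCoeff _ 9 (by omega), hco 9 le_rfl]
    norm_num [gA]
    ring
  · rw [if_neg h9]
    have hn : n ≤ 3 := by
      by_contra h
      push_neg at h
      have : 4 * 5 ≤ n * (n + 1) := Nat.mul_le_mul (by omega) (by omega)
      omega
    interval_cases n <;> norm_num
end

section
/- For every integer n ≥ 0, the coefficient A_{n,12} of the Yablonskii–Vorob'ev polynomial Q_n equals A_{n,12} = (1/31104) n (n² − 1)(n² − 4)(n² − 9)(n² − 16)(n + 5)(n⁶ + 3n⁵ − 109n⁴ − 223n³ + 5148n² + 5260n − 110880). -/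
open Polynomial

section YV
open Finset


def tc (p : Polynomial ℚ) (d k : ℕ) : ℚ := if k ≤ d then p.coeff (d - k) else 0

lemma tc_mul (p q : Polynomial ℚ) (dp dq : ℕ) (hp : p.natDegree ≤ dp)
    (hq : q.natDegree ≤ dq) (k : ℕ) (hk : k ≤ dp + dq) :
    (p * q).coeff (dp + dq - k) = ∑ j ∈ range (k + 1), tc p dp (k - j) * tc q dq j := by
  set N := dp + dq - k with hN
  have h1 : (p * q).coeff N = ∑ a ∈ range (N + 1), p.coeff a * q.coeff (N - a) := by
    rw [coeff_mul, Finset.Nat.sum_antidiagonal_eq_sum_range_succ_mk]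
  rw [h1]
  rw [← Finset.sum_filter_of_ne (p := fun a => N - dq ≤ a ∧ a ≤ dp)
      (f := fun a => p.coeff a * q.coeff (N - a))]
  · rw [← Finset.sum_filter_of_ne (s := range (k+1)) (p := fun j => k - j ≤ dp ∧ j ≤ dq)
        (f := fun j => tc p dp (k - j) * tc q dq j)]
    · apply Finset.sum_nbij' (i := fun a => dq - (N - a)) (j := fun j => dp - (k - j))
      · intro a ha
        simp only [Finset.mem_filter, Finset.mem_range] at ha ⊢
        omega
      · intro a ha
        simp only [Finset.mem_filter, Finset.mem_range] at ha ⊢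
        omega
      · intro a ha
        simp only [Finset.mem_filter, Finset.mem_range] at ha
        omega
      · intro a ha
        simp only [Finset.mem_filter, Finset.mem_range] at ha
        omega
      · intro a ha
        simp only [Finset.mem_filter, Finset.mem_range] at ha
        simp only [tc]
        rw [if_pos (by omega : k - (dq - (N - a)) ≤ dp),
            if_pos (by omega : dq - (N - a) ≤ dq)]
        have e1 : dp - (k - (dq - (N - a))) = a := by omega
        have e2 : dq - (dq - (N - a)) = N - a := by omega
        rw [e1, e2]
    · intro j hj hne
      simp only [Finset.mem_range] at hj
      constructor
      · by_contra h
        apply hne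
        simp only [tc, if_neg h, zero_mul]
      · by_contra h
        apply hne
        simp only [tc, if_neg h, mul_zero]
  · intro a ha hne
    simp only [Finset.mem_range] at ha
    constructor
    · by_contra h
      exact hne (by rw [coeff_eq_zero_of_natDegree_lt (lt_of_le_of_lt hq (by omega)), mul_zero])
    · by_contra h
      exact hne (by rw [coeff_eq_zero_of_natDegree_lt (lt_of_le_of_lt hp (by omega)), zero_mul])

lemma tc_derivative (p : Polynomial ℚ) (d : ℕ) (hp : p.natDegree ≤ d) (hd : 1 ≤ d) (k : ℕ) :
    tc (derivative p) (d - 1) k = ((d : ℚ) - k) * tc p d k := by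
  simp only [tc]
  by_cases h2 : k ≤ d
  · by_cases h1 : k ≤ d - 1
    · rw [if_pos h1, if_pos h2, coeff_derivative]
      have e1 : d - 1 - k + 1 = d - k := by omega
      have e2 : ((d - 1 - k : ℕ) : ℚ) + 1 = (d : ℚ) - k := by
        have h3 : (d - 1 - k) + (k + 1) = d := by omega
        have h4 := congrArg (Nat.cast : ℕ → ℚ) h3
        push_cast at h4; linarith
      rw [e1, e2]; ring
    · have hkd : k = d := by omega
      rw [if_neg h1, if_pos h2, hkd]; simp
  · rw [if_neg (by omega : ¬ k ≤ d - 1), if_neg h2, mul_zero]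

lemma tc_derivative2 (p : Polynomial ℚ) (d : ℕ) (hp : p.natDegree ≤ d) (hd : 2 ≤ d) (k : ℕ) :
    tc (derivative (derivative p)) (d - 2) k
      = ((d : ℚ) - 1 - k) * (((d : ℚ) - k) * tc p d k) := by
  have h1 : p.derivative.natDegree ≤ d - 1 :=
    le_trans (natDegree_derivative_le p) (by omega)
  have e : d - 2 = (d - 1) - 1 := by omega
  rw [e, tc_derivative _ _ h1 (by omega), tc_derivative _ _ hp (by omega)]
  have : ((d - 1 : ℕ) : ℚ) = (d : ℚ) - 1 := by
    have := congrArg (Nat.cast : ℕ → ℚ) (by omega : (d - 1) + 1 = d)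
    push_cast at this; linarith
  rw [this]

lemma coeffA_tc (Q : ℕ → Polynomial ℚ) (i d : ℕ) (h : i * (i + 1) / 2 = d) (k : ℕ) :
    tc (Q i) d k = coeffA Q i k := by subst h; rfl


noncomputable def F : ℕ → ℚ → ℚ
  | 0, _ => 1
  | 3, x => (x^4 + 2*x^3 - x^2 - 2*x) / 6
  | 6, x => (x^8 + 4*x^7 - 22*x^6 - 80*x^5 + 89*x^4 + 316*x^3 - 68*x^2 - 240*x) / 72
  | 9, x => (x^12 + 6*x^11 - 63*x^10 - 370*x^9 + 1623*x^8 + 8778*x^7 - 14869*x^6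
      - 76950*x^5 + 45276*x^4 + 229816*x^3 - 31968*x^2 - 161280*x) / 1296
  | 12, x => (x^16 + 8*x^15 - 124*x^14 - 1008*x^13 + 7126*x^12 + 56224*x^11
      - 232052*x^10 - 1700624*x^9 + 3716065*x^8 + 25729368*x^7 - 26451544*x^6
      - 177213568*x^5 + 71678608*x^4 + 472464000*x^3 - 48718080*x^2 - 319334400*x) / 31104
  | _, _ => 0

def Good (Q : ℕ → Polynomial ℚ) (n : ℕ) : Prop :=
  (Q n).Monic ∧ (Q n).natDegree = n * (n + 1) / 2 ∧
    ∀ k ≤ 12, coeffA Q n k = F k (n : ℚ)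

section Base
variable (Q : ℕ → Polynomial ℚ)
    (hQ0 : Q 0 = 1) (hQ1 : Q 1 = X)
    (hQrec : ∀ n : ℕ, Q (n + 2) * Q n =
      X * (Q (n + 1)) ^ 2 -
        4 * (Q (n + 1) * derivative (derivative (Q (n + 1))) -
              (derivative (Q (n + 1))) ^ 2))

include hQ0 hQ1 hQrec

lemma hQ2 : Q 2 = X ^ 3 + C 4 := by
  have h := hQrec 0
  rw [hQ0, hQ1, mul_one] at h
  rw [h, map_ofNat]; simp [map_ofNat] <;> ring

lemma hQ3 : Q 3 = X ^ 6 + C 20 * X ^ 3 - C 80 := by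
  have h := hQrec 1
  rw [hQ1, hQ2 Q hQ0 hQ1 hQrec] at h
  have hd1 : derivative ((X : ℚ[X]) ^ 3 + C 4) = 3 * X ^ 2 := by simp [map_ofNat] <;> ring
  have hd2 : derivative ((3 : ℚ[X]) * X ^ 2) = 6 * X := by simp [map_ofNat] <;> ring
  rw [hd1, hd2] at h
  have h2 : Q 3 * X = (X ^ 6 + C 20 * X ^ 3 - C 80) * X := by
    rw [show (1:ℕ) + 2 = 3 from rfl] at h
    rw [h, map_ofNat, map_ofNat, map_ofNat]; ring
  exact mul_right_cancel₀ X_ne_zero h2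

lemma good0 : Good Q 0 := by
  refine ⟨?_, ?_, ?_⟩
  · rw [hQ0]; exact monic_one
  · rw [hQ0]; simp
  · intro k hk
    interval_cases k <;> simp [coeffA, hQ0, F] <;> norm_num

lemma good1 : Good Q 1 := by
  refine ⟨?_, ?_, ?_⟩
  · rw [hQ1]; exact monic_X
  · rw [hQ1]; simp
  · intro k hk
    interval_cases k <;> simp [coeffA, hQ1, F] <;> norm_num

lemma good2 : Good Q 2 := by
  have h2 := hQ2 Q hQ0 hQ1 hQrec
  refine ⟨?_, ?_, ?_⟩
  · rw [h2]
    exact monic_X_pow_add_C _ (by norm_num)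
  · rw [h2]
    compute_degree!
  · intro k hk
    interval_cases k <;>
      simp [coeffA, h2, coeff_X_pow, coeff_C, F] <;> norm_num [F]

lemma good3 : Good Q 3 := by
  have h3 := hQ3 Q hQ0 hQ1 hQrec
  refine ⟨?_, ?_, ?_⟩
  · rw [h3]; monicity!
  · rw [h3]; compute_degree!
  · intro k hk
    interval_cases k <;>
      simp [coeffA, h3, coeff_X_pow, coeff_C, F] <;> norm_num [F]

end Base

lemma F0 (x : ℚ) : F 0 x = 1 := rfl
lemma F1 (x : ℚ) : F 1 x = 0 := rfl
lemma F2 (x : ℚ) : F 2 x = 0 := rfl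
lemma F3 (x : ℚ) : F 3 x = (x^4 + 2*x^3 - x^2 - 2*x) / 6 := rfl
lemma F4 (x : ℚ) : F 4 x = 0 := rfl
lemma F5 (x : ℚ) : F 5 x = 0 := rfl
lemma F6 (x : ℚ) : F 6 x = (x^8 + 4*x^7 - 22*x^6 - 80*x^5 + 89*x^4 + 316*x^3 - 68*x^2 - 240*x) / 72 := rfl
lemma F7 (x : ℚ) : F 7 x = 0 := rfl
lemma F8 (x : ℚ) : F 8 x = 0 := rfl
lemma F9 (x : ℚ) : F 9 x = (x^12 + 6*x^11 - 63*x^10 - 370*x^9 + 1623*x^8 + 8778*x^7 - 14869*x^6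
      - 76950*x^5 + 45276*x^4 + 229816*x^3 - 31968*x^2 - 161280*x) / 1296 := rfl
lemma F10 (x : ℚ) : F 10 x = 0 := rfl
lemma F11 (x : ℚ) : F 11 x = 0 := rfl
lemma F12 (x : ℚ) : F 12 x = (x^16 + 8*x^15 - 124*x^14 - 1008*x^13 + 7126*x^12 + 56224*x^11
      - 232052*x^10 - 1700624*x^9 + 3716065*x^8 + 25729368*x^7 - 26451544*x^6
      - 177213568*x^5 + 71678608*x^4 + 472464000*x^3 - 48718080*x^2 - 319334400*x) / 31104 := rfl


set_option maxHeartbeats 4000000 in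
lemma step_s19 (Q : ℕ → Polynomial ℚ)
    (hQrec : ∀ n : ℕ, Q (n + 2) * Q n =
      X * (Q (n + 1)) ^ 2 -
        4 * (Q (n + 1) * derivative (derivative (Q (n + 1))) -
              (derivative (Q (n + 1))) ^ 2))
    (n : ℕ) (hn : 2 ≤ n) (hgn : Good Q n) (hgn1 : Good Q (n + 1)) : Good Q (n + 2) := by
  obtain ⟨mon, hdeg, hcoef⟩ := hgn
  obtain ⟨mon1, hdeg1, hcoef1⟩ := hgn1
  obtain ⟨a, ha⟩ := Nat.even_mul_succ_self n
  -- nat facts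
  have hm : n * (n + 1) / 2 = a := by rw [ha]; omega
  have hm1 : (n + 1) * (n + 1 + 1) / 2 = a + n + 1 := by
    rw [show (n + 1) * (n + 1 + 1) = n * (n + 1) + 2 * n + 2 by ring, ha]; omega
  have hM : (n + 2) * (n + 2 + 1) / 2 = a + 2 * n + 3 := by
    rw [show (n + 2) * (n + 2 + 1) = n * (n + 1) + 4 * n + 6 by ring, ha]; omega
  have ha3 : 3 ≤ a := by
    have h6 : 2 * 3 ≤ n * (n + 1) := Nat.mul_le_mul hn (by omega)
    rw [ha] at h6; omega
  -- rational casts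
  have hax : (a : ℚ) = ((n : ℚ) ^ 2 + (n : ℚ)) / 2 := by
    have h := congrArg (Nat.cast : ℕ → ℚ) ha
    push_cast at h
    linear_combination -h / 2
  -- degree bookkeeping
  have hdeg1' : (Q (n + 1)).natDegree = a + n + 1 := by rw [hdeg1, hm1]
  have hdegn : (Q n).natDegree = a := by rw [hdeg, hm]
  have hD1 : (derivative (Q (n + 1))).natDegree ≤ a + n + 1 - 1 :=
    le_trans (natDegree_derivative_le _) (by omega)
  have hD2 : (derivative (derivative (Q (n + 1)))).natDegree ≤ a + n + 1 - 2 :=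
    le_trans (natDegree_derivative_le _) (by omega)
  have hTdeg : (Q (n + 1) * derivative (derivative (Q (n + 1))) -
      (derivative (Q (n + 1))) ^ 2).natDegree ≤ 2 * (a + n + 1) - 2 := by
    apply le_trans (natDegree_sub_le _ _)
    apply max_le
    · exact le_trans (natDegree_mul_le) (by omega)
    · exact le_trans (natDegree_pow_le) (by omega)
  have hT4deg : ((4 : Polynomial ℚ) * (Q (n + 1) * derivative (derivative (Q (n + 1))) -
      (derivative (Q (n + 1))) ^ 2)).natDegree ≤ 2 * (a + n + 1) - 2 := by
    apply le_trans (natDegree_mul_le)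
    rw [show (4 : Polynomial ℚ) = C 4 from (map_ofNat C 4).symm, natDegree_C]
    omega
  have hXmon : (X * (Q (n + 1)) ^ 2).Monic := monic_X.mul (mon1.pow 2)
  have hXdeg : (X * (Q (n + 1)) ^ 2).natDegree = 2 * (a + n + 1) + 1 := by
    rw [monic_X.natDegree_mul (mon1.pow 2), natDegree_pow, hdeg1', natDegree_X]
    ring
  have hRdeg : (X * (Q (n + 1)) ^ 2 -
      4 * (Q (n + 1) * derivative (derivative (Q (n + 1))) -
        (derivative (Q (n + 1))) ^ 2)).natDegree = 2 * (a + n + 1) + 1 := by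
    rw [natDegree_sub_eq_left_of_natDegree_lt, hXdeg]
    rw [hXdeg]; omega
  have hRlc : (X * (Q (n + 1)) ^ 2 -
      4 * (Q (n + 1) * derivative (derivative (Q (n + 1))) -
        (derivative (Q (n + 1))) ^ 2)).Monic := by
    unfold Monic leadingCoeff
    rw [hRdeg, coeff_sub,
      coeff_eq_zero_of_natDegree_lt (lt_of_le_of_lt hT4deg (by omega)), sub_zero]
    have := hXmon.coeff_natDegree
    rwa [hXdeg] at this
  have hprodmon : (Q (n + 2) * Q n).Monic := by rw [hQrec n]; exact hRlc
  have hQ2ne : Q (n + 2) ≠ 0 := by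
    intro h
    apply hprodmon.ne_zero
    rw [h, zero_mul]
  have hmon2 : (Q (n + 2)).Monic := by
    have h := hprodmon
    unfold Monic at h ⊢
    rw [leadingCoeff_mul, mon.leadingCoeff, mul_one] at h
    exact h
  have hdeg2 : (Q (n + 2)).natDegree = a + 2 * n + 3 := by
    have h : (Q (n + 2) * Q n).natDegree = 2 * (a + n + 1) + 1 := by
      rw [hQrec n]; exact hRdeg
    rw [natDegree_mul hQ2ne mon.ne_zero, hdegn] at h
    omega
  -- coefficient extraction
  have hcast1 : ((n + 1 : ℕ) : ℚ) = (n : ℚ) + 1 := by push_cast; ring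
  have hs1 : ∀ j ≤ 12, coeffA Q (n + 1) j = F j ((n : ℚ) + 1) := by
    intro j hj; rw [hcoef1 j hj, hcast1]
  have keyL : ∀ k ≤ 12, (Q (n + 2) * Q n).coeff ((a + 2 * n + 3) + a - k)
      = ∑ j ∈ range (k + 1), coeffA Q (n + 2) (k - j) * F j (n : ℚ) := by
    intro k hk
    rw [tc_mul _ _ _ _ hdeg2.le hdegn.le k (by omega)]
    refine Finset.sum_congr rfl fun j hj => ?_
    simp only [Finset.mem_range] at hj
    rw [coeffA_tc Q (n + 2) _ hM, coeffA_tc Q n _ hm, hcoef j (by omega)]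
  have keyR1 : ∀ k ≤ 12, (X * (Q (n + 1)) ^ 2).coeff (2 * (a + n + 1) + 1 - k)
      = ∑ j ∈ range (k + 1), F (k - j) ((n : ℚ) + 1) * F j ((n : ℚ) + 1) := by
    intro k hk
    have i1 : 2 * (a + n + 1) + 1 - k = ((a + n + 1) + (a + n + 1) - k) + 1 := by omega
    rw [i1, coeff_X_mul, pow_two, tc_mul _ _ _ _ hdeg1'.le hdeg1'.le k (by omega)]
    refine Finset.sum_congr rfl fun j hj => ?_
    simp only [Finset.mem_range] at hj
    rw [coeffA_tc Q (n + 1) _ hm1, coeffA_tc Q (n + 1) _ hm1,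
      hs1 _ (by omega), hs1 _ (by omega)]
  have keyR2 : ∀ k, 3 ≤ k → k ≤ 12 →
      (Q (n + 1) * derivative (derivative (Q (n + 1)))).coeff (2 * (a + n + 1) + 1 - k)
      = ∑ j ∈ range (k - 3 + 1), F (k - 3 - j) ((n : ℚ) + 1) *
          ((((a + n + 1 : ℕ) : ℚ) - 1 - j) * ((((a + n + 1 : ℕ) : ℚ) - j) * F j ((n : ℚ) + 1))) := by
    intro k h3 hk
    have i2 : 2 * (a + n + 1) + 1 - k = (a + n + 1) + (a + n + 1 - 2) - (k - 3) := by omega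
    rw [i2, tc_mul _ _ _ _ hdeg1'.le hD2 (k - 3) (by omega)]
    refine Finset.sum_congr rfl fun j hj => ?_
    simp only [Finset.mem_range] at hj
    rw [tc_derivative2 _ _ hdeg1'.le (by omega) j,
      coeffA_tc Q (n + 1) _ hm1, coeffA_tc Q (n + 1) _ hm1,
      hs1 _ (by omega), hs1 _ (by omega)]
  have keyR3 : ∀ k, 3 ≤ k → k ≤ 12 →
      ((derivative (Q (n + 1))) ^ 2).coeff (2 * (a + n + 1) + 1 - k)
      = ∑ j ∈ range (k - 3 + 1),
          ((((a + n + 1 : ℕ) : ℚ) - ((k - 3 - j : ℕ) : ℚ)) * F (k - 3 - j) ((n : ℚ) + 1)) *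
          ((((a + n + 1 : ℕ) : ℚ) - j) * F j ((n : ℚ) + 1)) := by
    intro k h3 hk
    have i3 : 2 * (a + n + 1) + 1 - k = (a + n + 1 - 1) + (a + n + 1 - 1) - (k - 3) := by omega
    rw [i3, pow_two, tc_mul _ _ _ _ hD1 hD1 (k - 3) (by omega)]
    refine Finset.sum_congr rfl fun j hj => ?_
    simp only [Finset.mem_range] at hj
    rw [tc_derivative _ _ hdeg1'.le (by omega), tc_derivative _ _ hdeg1'.le (by omega),
      coeffA_tc Q (n + 1) _ hm1, coeffA_tc Q (n + 1) _ hm1,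
      hs1 _ (by omega), hs1 _ (by omega)]
  have main : ∀ k, 3 ≤ k → k ≤ 12 →
      ∑ j ∈ range (k + 1), coeffA Q (n + 2) (k - j) * F j (n : ℚ)
      = (∑ j ∈ range (k + 1), F (k - j) ((n : ℚ) + 1) * F j ((n : ℚ) + 1))
        - 4 * ((∑ j ∈ range (k - 3 + 1), F (k - 3 - j) ((n : ℚ) + 1) *
              ((((a + n + 1 : ℕ) : ℚ) - 1 - j) * ((((a + n + 1 : ℕ) : ℚ) - j) * F j ((n : ℚ) + 1))))
          - (∑ j ∈ range (k - 3 + 1),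
              ((((a + n + 1 : ℕ) : ℚ) - ((k - 3 - j : ℕ) : ℚ)) * F (k - 3 - j) ((n : ℚ) + 1)) *
              ((((a + n + 1 : ℕ) : ℚ) - j) * F j ((n : ℚ) + 1)))) := by
    intro k h3 hk
    have h := congrArg (fun p : Polynomial ℚ => p.coeff ((a + 2 * n + 3) + a - k)) (hQrec n)
    rw [keyL k hk] at h
    have i0 : (a + 2 * n + 3) + a - k = 2 * (a + n + 1) + 1 - k := by omega
    rw [i0, coeff_sub, keyR1 k hk,
      show (4 : Polynomial ℚ) = C 4 from (map_ofNat C 4).symm, coeff_C_mul, coeff_sub,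
      keyR2 k h3 hk, keyR3 k h3 hk] at h
    exact h
  have main0 : ∀ k ≤ 2,
      ∑ j ∈ range (k + 1), coeffA Q (n + 2) (k - j) * F j (n : ℚ)
      = ∑ j ∈ range (k + 1), F (k - j) ((n : ℚ) + 1) * F j ((n : ℚ) + 1) := by
    intro k hk
    have h := congrArg (fun p : Polynomial ℚ => p.coeff ((a + 2 * n + 3) + a - k)) (hQrec n)
    rw [keyL k (by omega)] at h
    have i0 : (a + 2 * n + 3) + a - k = 2 * (a + n + 1) + 1 - k := by omega
    rw [i0, coeff_sub, keyR1 k (by omega),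
      coeff_eq_zero_of_natDegree_lt (lt_of_le_of_lt hT4deg (by omega)), sub_zero] at h
    exact h
  -- solve sequentially
  have hb0 : coeffA Q (n + 2) 0 = 1 := by
    rw [← coeffA_tc Q (n + 2) _ hM]
    simp only [tc]
    rw [if_pos (by omega), Nat.sub_zero, ← hdeg2]
    exact hmon2.coeff_natDegree
  have hb1 : coeffA Q (n + 2) 1 = 0 := by
    have e := main0 1 (by norm_num)
    simp only [Finset.sum_range_succ, Finset.sum_range_zero] at e
    norm_num at e
    simp only [hb0, F0, F1, F2, F3, F4, F5, F6, F7, F8, F9, F10, F11, F12] at e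
    try rw [hax] at e
    linear_combination e
  have hb2 : coeffA Q (n + 2) 2 = 0 := by
    have e := main0 2 (by norm_num)
    simp only [Finset.sum_range_succ, Finset.sum_range_zero] at e
    norm_num at e
    simp only [hb0, hb1, F0, F1, F2, F3, F4, F5, F6, F7, F8, F9, F10, F11, F12] at e
    try rw [hax] at e
    linear_combination e
  have hb3 : coeffA Q (n + 2) 3 = F 3 ((n : ℚ) + 2) := by
    have e := main 3 (by norm_num) (by norm_num)
    simp only [Finset.sum_range_succ, Finset.sum_range_zero] at e
    norm_num at e
    simp only [hb0, hb1, hb2, F0, F1, F2, F3, F4, F5, F6, F7, F8, F9, F10, F11, F12] at e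
    try rw [hax] at e
    try rw [F3]
    linear_combination e
  have hb4 : coeffA Q (n + 2) 4 = 0 := by
    have e := main 4 (by norm_num) (by norm_num)
    simp only [Finset.sum_range_succ, Finset.sum_range_zero] at e
    norm_num at e
    simp only [hb0, hb1, hb2, hb3, F0, F1, F2, F3, F4, F5, F6, F7, F8, F9, F10, F11, F12] at e
    try rw [hax] at e
    linear_combination e
  have hb5 : coeffA Q (n + 2) 5 = 0 := by
    have e := main 5 (by norm_num) (by norm_num)
    simp only [Finset.sum_range_succ, Finset.sum_range_zero] at e
    norm_num at e
    simp only [hb0, hb1, hb2, hb3, hb4, F0, F1, F2, F3, F4, F5, F6, F7, F8, F9, F10, F11, F12] at e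
    try rw [hax] at e
    linear_combination e
  have hb6 : coeffA Q (n + 2) 6 = F 6 ((n : ℚ) + 2) := by
    have e := main 6 (by norm_num) (by norm_num)
    simp only [Finset.sum_range_succ, Finset.sum_range_zero] at e
    norm_num at e
    simp only [hb0, hb1, hb2, hb3, hb4, hb5, F0, F1, F2, F3, F4, F5, F6, F7, F8, F9, F10, F11, F12] at e
    try rw [hax] at e
    try rw [F6]
    linear_combination e
  have hb7 : coeffA Q (n + 2) 7 = 0 := by
    have e := main 7 (by norm_num) (by norm_num)
    simp only [Finset.sum_range_succ, Finset.sum_range_zero] at e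
    norm_num at e
    simp only [hb0, hb1, hb2, hb3, hb4, hb5, hb6, F0, F1, F2, F3, F4, F5, F6, F7, F8, F9, F10, F11, F12] at e
    try rw [hax] at e
    linear_combination e
  have hb8 : coeffA Q (n + 2) 8 = 0 := by
    have e := main 8 (by norm_num) (by norm_num)
    simp only [Finset.sum_range_succ, Finset.sum_range_zero] at e
    norm_num at e
    simp only [hb0, hb1, hb2, hb3, hb4, hb5, hb6, hb7, F0, F1, F2, F3, F4, F5, F6, F7, F8, F9, F10, F11, F12] at e
    try rw [hax] at e
    linear_combination e
  have hb9 : coeffA Q (n + 2) 9 = F 9 ((n : ℚ) + 2) := by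
    have e := main 9 (by norm_num) (by norm_num)
    simp only [Finset.sum_range_succ, Finset.sum_range_zero] at e
    norm_num at e
    simp only [hb0, hb1, hb2, hb3, hb4, hb5, hb6, hb7, hb8, F0, F1, F2, F3, F4, F5, F6, F7, F8, F9, F10, F11, F12] at e
    try rw [hax] at e
    try rw [F9]
    linear_combination e
  have hb10 : coeffA Q (n + 2) 10 = 0 := by
    have e := main 10 (by norm_num) (by norm_num)
    simp only [Finset.sum_range_succ, Finset.sum_range_zero] at e
    norm_num at e
    simp only [hb0, hb1, hb2, hb3, hb4, hb5, hb6, hb7, hb8, hb9, F0, F1, F2, F3, F4, F5, F6, F7, F8, F9, F10, F11, F12] at e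
    try rw [hax] at e
    linear_combination e
  have hb11 : coeffA Q (n + 2) 11 = 0 := by
    have e := main 11 (by norm_num) (by norm_num)
    simp only [Finset.sum_range_succ, Finset.sum_range_zero] at e
    norm_num at e
    simp only [hb0, hb1, hb2, hb3, hb4, hb5, hb6, hb7, hb8, hb9, hb10, F0, F1, F2, F3, F4, F5, F6, F7, F8, F9, F10, F11, F12] at e
    try rw [hax] at e
    linear_combination e
  have hb12 : coeffA Q (n + 2) 12 = F 12 ((n : ℚ) + 2) := by
    have e := main 12 (by norm_num) (by norm_num)
    simp only [Finset.sum_range_succ, Finset.sum_range_zero] at e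
    norm_num at e
    simp only [hb0, hb1, hb2, hb3, hb4, hb5, hb6, hb7, hb8, hb9, hb10, hb11, F0, F1, F2, F3, F4, F5, F6, F7, F8, F9, F10, F11, F12] at e
    try rw [hax] at e
    try rw [F12]
    linear_combination e
  -- assemble
  have hcast2 : ((n + 2 : ℕ) : ℚ) = (n : ℚ) + 2 := by push_cast; ring
  refine ⟨hmon2, by rw [hdeg2, ← hM], ?_⟩
  intro k hk
  interval_cases k
  · rw [hcast2, F0]; exact hb0
  · rw [hcast2, F1]; exact hb1
  · rw [hcast2, F2]; exact hb2
  · rw [hcast2]; exact hb3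
  · rw [hcast2, F4]; exact hb4
  · rw [hcast2, F5]; exact hb5
  · rw [hcast2]; exact hb6
  · rw [hcast2, F7]; exact hb7
  · rw [hcast2, F8]; exact hb8
  · rw [hcast2]; exact hb9
  · rw [hcast2, F10]; exact hb10
  · rw [hcast2, F11]; exact hb11
  · rw [hcast2]; exact hb12

lemma good_all (Q : ℕ → Polynomial ℚ)
    (hQ0 : Q 0 = 1) (hQ1 : Q 1 = X)
    (hQrec : ∀ n : ℕ, Q (n + 2) * Q n =
      X * (Q (n + 1)) ^ 2 -
        4 * (Q (n + 1) * derivative (derivative (Q (n + 1))) -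
              (derivative (Q (n + 1))) ^ 2)) :
    ∀ n : ℕ, Good Q n := by
  have pair : ∀ k : ℕ, Good Q (k + 2) ∧ Good Q (k + 3) := by
    intro k
    induction k with
    | zero => exact ⟨good2 Q hQ0 hQ1 hQrec, good3 Q hQ0 hQ1 hQrec⟩
    | succ k ih => exact ⟨ih.2, step_s19 Q hQrec (k + 2) (by omega) ih.1 ih.2⟩
  intro n
  match n with
  | 0 => exact good0 Q hQ0 hQ1 hQrec
  | 1 => exact good1 Q hQ0 hQ1 hQrec
  | (m + 2) => exact (pair m).1

end YV

/-- Explicit formula for the coefficient `A_{n,12}` of the Yablonskii–Vorob'ev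
polynomial `Q n`. -/
theorem coeffA_twelve
    (Q : ℕ → Polynomial ℚ)
    (hQ0 : Q 0 = 1) (hQ1 : Q 1 = X)
    (hQrec : ∀ n : ℕ, Q (n + 2) * Q n =
      X * (Q (n + 1)) ^ 2 -
        4 * (Q (n + 1) * derivative (derivative (Q (n + 1))) -
              (derivative (Q (n + 1))) ^ 2)) :
    ∀ n : ℕ,
      coeffA Q n 12 =
        (1 / 31104) * (n : ℚ) * ((n : ℚ) ^ 2 - 1) * ((n : ℚ) ^ 2 - 4) * ((n : ℚ) ^ 2 - 9) * ((n : ℚ) ^ 2 - 16) * ((n : ℚ) + 5) * ((n : ℚ) ^ 6 + 3 * (n : ℚ) ^ 5 - 109 * (n : ℚ) ^ 4 - 223 * (n : ℚ) ^ 3 + 5148 * (n : ℚ) ^ 2 + 5260 * (n : ℚ) - 110880) := by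
  intro n
  have hg := good_all Q hQ0 hQ1 hQrec n
  rw [hg.2.2 12 (le_refl 12), F12]
  ring
end
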